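/- arXiv:2105.13154 — 11 statements merged into one kernel-verified Lean document; each statement's English description precedes it below -/
import Mathlib

section
/- For all integers k, m, n with 0 ≤ k ≤ m ≤ n, the number of isomorphism classes of k-functions satisfies G(m,k) ≤ G(n,k); that is, the sequence (G(n,k))_{n≥k} is increasing in n. -/
/-- Negate the `i`-th coordinate of a vertex `x` of the hypercube `{-1,1}^n`
(coordinates are `ℤˣ = {-1,1}`). -/
def flipCoord {n : ℕ} (x : Fin n → ℤˣ) (i : Fin n) : Fin n → ℤˣ :=
  Function.update x i (-(x i))

/-- `f` is a `k`-function: every vertex has exactly `k` neighbours where `f` differs. -/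
def IsKFun {n : ℕ} {β : Type*} (k : ℕ) (f : (Fin n → ℤˣ) → β) : Prop :=
  ∀ x, Set.ncard {i : Fin n | f (flipCoord x i) ≠ f x} = k

/-- `F n k`: the number of `k`-functions on `Q_n`. -/
noncomputable def numKFun (n k : ℕ) : ℕ :=
  Nat.card {f : (Fin n → ℤˣ) → ℤˣ // IsKFun k f}

/-- Two real-valued functions on `Q_n` are isomorphic: `f x = ε • g y` with
`y i = α i * x (σ i)` for a sign `ε`, a vector `α ∈ {-1,1}^n` and a permutation `σ`. -/
def Isom {n : ℕ} (f g : (Fin n → ℤˣ) → ℝ) : Prop :=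
  ∃ (ε : ℤˣ) (α : Fin n → ℤˣ) (σ : Equiv.Perm (Fin n)),
    ∀ x, f x = ((ε : ℤ) : ℝ) * g (fun i => α i * x (σ i))

/-- View a Boolean (`ℤˣ`-valued) function as real-valued. -/
noncomputable def toReal {n : ℕ} (f : (Fin n → ℤˣ) → ℤˣ) : (Fin n → ℤˣ) → ℝ :=
  fun x => ((f x : ℤ) : ℝ)

/-- `G n k`: the number of isomorphism classes of `k`-functions on `Q_n`. -/
noncomputable def numIsoKFun (n k : ℕ) : ℕ :=
  Nat.card (Quot fun (f g : {f : (Fin n → ℤˣ) → ℤˣ // IsKFun k f}) =>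
    Isom (toReal f.1) (toReal g.1))

namespace KFunAux

/-- unit-level isomorphism -/
def IsomU {n : ℕ} (f g : (Fin n → ℤˣ) → ℤˣ) : Prop :=
  ∃ (ε : ℤˣ) (α : Fin n → ℤˣ) (σ : Equiv.Perm (Fin n)),
    ∀ x, f x = ε * g (fun i => α i * x (σ i))

lemma isom_iff {n : ℕ} (f g : (Fin n → ℤˣ) → ℤˣ) :
    Isom (toReal f) (toReal g) ↔ IsomU f g := by
  constructor
  · rintro ⟨ε, α, σ, h⟩
    refine ⟨ε, α, σ, fun x => ?_⟩
    have hx := h x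
    simp only [toReal] at hx
    exact Units.ext (by exact_mod_cast hx)
  · rintro ⟨ε, α, σ, h⟩
    refine ⟨ε, α, σ, fun x => ?_⟩
    have := h x
    simp only [toReal, this]
    push_cast
    ring

def ymap {n : ℕ} (α : Fin n → ℤˣ) (σ : Equiv.Perm (Fin n)) (x : Fin n → ℤˣ) :
    Fin n → ℤˣ := fun i => α i * x (σ i)

lemma ymap_ymap_symm {n : ℕ} (α : Fin n → ℤˣ) (σ : Equiv.Perm (Fin n)) (v : Fin n → ℤˣ) :
    ymap α σ (fun j => α (σ.symm j) * v (σ.symm j)) = v := by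
  funext i
  simp [ymap, ← mul_assoc, Int.units_mul_self]

lemma ymap_flip {n : ℕ} (α : Fin n → ℤˣ) (σ : Equiv.Perm (Fin n)) (x : Fin n → ℤˣ)
    (l : Fin n) : ymap α σ (flipCoord x (σ l)) = flipCoord (ymap α σ x) l := by
  funext i
  by_cases h : i = l
  · subst h
    simp [ymap, flipCoord, Function.update_self]
  · have : σ i ≠ σ l := fun hc => h (σ.injective hc)
    simp [ymap, flipCoord, Function.update_of_ne h, Function.update_of_ne this]


lemma isomU_refl {n : ℕ} (f : (Fin n → ℤˣ) → ℤˣ) : IsomU f f :=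
  ⟨1, fun _ => 1, Equiv.refl _, fun x => by simp⟩

lemma isomU_symm {n : ℕ} {f g : (Fin n → ℤˣ) → ℤˣ} (h : IsomU f g) : IsomU g f := by
  obtain ⟨ε, α, σ, h⟩ := h
  refine ⟨ε, fun i => α (σ.symm i), σ.symm, fun v => ?_⟩
  have h2 := h (fun j => α (σ.symm j) * v (σ.symm j))
  have h3 : (fun i => α i * (fun j => α (σ.symm j) * v (σ.symm j)) (σ i)) = v :=
    ymap_ymap_symm α σ v
  rw [h3] at h2
  calc g v = (ε * ε) * g v := by rw [Int.units_mul_self, one_mul]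
    _ = ε * (ε * g v) := by rw [mul_assoc]
    _ = ε * f fun i => α (σ.symm i) * v (σ.symm i) := by rw [← h2]

lemma isomU_trans {n : ℕ} {f g h : (Fin n → ℤˣ) → ℤˣ} (h1 : IsomU f g)
    (h2 : IsomU g h) : IsomU f h := by
  obtain ⟨ε, α, σ, h1⟩ := h1
  obtain ⟨ε', α', σ', h2⟩ := h2
  refine ⟨ε * ε', fun i => α' i * α (σ' i), σ'.trans σ, fun x => ?_⟩
  rw [h1 x, h2 (fun i => α i * x (σ i)), ← mul_assoc]
  have harg : (fun i => α' i * (fun i => α i * x (σ i)) (σ' i)) =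
      fun i => (fun i => α' i * α (σ' i)) i * x ((σ'.trans σ) i) := by
    funext i
    simp [Equiv.trans_apply, mul_assoc]
  rw [harg]

lemma isomU_equivalence (n : ℕ) : Equivalence (@IsomU n) :=
  ⟨isomU_refl, isomU_symm, isomU_trans⟩

/-- `j` is an insensitive coordinate of `g`. -/
def Insens {n : ℕ} (g : (Fin n → ℤˣ) → ℤˣ) (j : Fin n) : Prop :=
  ∀ v, g (flipCoord v j) = g v

lemma units_neg_of_ne {u v : ℤˣ} (h : u ≠ v) : v = -u := by
  rcases Int.units_eq_one_or u with rfl | rfl <;>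
    rcases Int.units_eq_one_or v with rfl | rfl <;> simp_all

/-- if two points agree on all sensitive coordinates of `g`, then `g` takes the
same value at them. -/
lemma agree {N : ℕ} (g : (Fin N → ℤˣ) → ℤˣ) (w w' : Fin N → ℤˣ)
    (h : ∀ j, w j ≠ w' j → Insens g j) : g w = g w' := by
  classical
  have H : ∀ s : Finset (Fin N), ∀ w : Fin N → ℤˣ,
      (∀ j, w j ≠ w' j → j ∈ s ∧ Insens g j) → g w = g w' := by
    intro s
    induction s using Finset.induction_on with
    | empty =>
      intro w hw
      congr 1
      funext j
      by_contra hj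
      exact absurd (hw j hj).1 (Finset.notMem_empty j)
    | @insert a s hnot ih =>
      intro w hw
      by_cases ha : w a = w' a
      · refine ih w (fun j hj => ?_)
        obtain ⟨hmem, hins⟩ := hw j hj
        rcases Finset.mem_insert.mp hmem with rfl | hmem'
        · exact absurd ha hj
        · exact ⟨hmem', hins⟩
      · have hins := (hw a ha).2
        have hwa : w' a = -(w a) := units_neg_of_ne ha
        have hstep : g w = g (Function.update w a (w' a)) := by
          rw [hwa]
          exact (hins w).symm
        rw [hstep]
        refine ih _ (fun j hj => ?_)
        have hja : j ≠ a := by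
          rintro rfl
          rw [Function.update_self] at hj
          exact hj rfl
        rw [Function.update_of_ne hja] at hj
        obtain ⟨hmem, hins'⟩ := hw j hj
        exact ⟨(Finset.mem_insert.mp hmem).resolve_left hja, hins'⟩
  exact H Finset.univ w (fun j hj => ⟨Finset.mem_univ j, h j hj⟩)

/-- insensitivity transport along an isomorphism. -/
lemma insens_transfer {n : ℕ} {F G : (Fin n → ℤˣ) → ℤˣ} {ε : ℤˣ} {α : Fin n → ℤˣ}
    {σ : Equiv.Perm (Fin n)} (h : ∀ x, F x = ε * G (ymap α σ x)) (l : Fin n) :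
    Insens F (σ l) ↔ Insens G l := by
  constructor
  · intro hF v
    obtain ⟨x, rfl⟩ : ∃ x, ymap α σ x = v :=
      ⟨fun j => α (σ.symm j) * v (σ.symm j), ymap_ymap_symm α σ v⟩
    have e1 : G (ymap α σ x) = ε * F x := by
      rw [h x, ← mul_assoc, Int.units_mul_self, one_mul]
    have e2 : G (flipCoord (ymap α σ x) l) = ε * F (flipCoord x (σ l)) := by
      rw [← ymap_flip, h (flipCoord x (σ l)), ← mul_assoc, Int.units_mul_self, one_mul]
    rw [e1, e2, hF x]
  · intro hG x
    rw [h (flipCoord x (σ l)), h x, ymap_flip, hG (ymap α σ x)]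


/-! ### Extension of functions from `Q_m` to `Q_n` -/

variable {m n : ℕ}

/-- Extend a function on `Q_m` to `Q_n` by ignoring the last coordinates. -/
def extFun (hmn : m ≤ n) (f : (Fin m → ℤˣ) → ℤˣ) : (Fin n → ℤˣ) → ℤˣ :=
  fun x => f (fun j => x (Fin.castLE hmn j))

/-- Extend a point of `Q_m` to `Q_n` by `1`s. -/
def extPt (hmn : m ≤ n) (x : Fin m → ℤˣ) : Fin n → ℤˣ :=
  fun i => if h : (i : ℕ) < m then x ⟨i, h⟩ else 1

lemma extPt_comp (hmn : m ≤ n) (x : Fin m → ℤˣ) :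
    (fun j => extPt hmn x (Fin.castLE hmn j)) = x := by
  funext j
  simp [extPt, j.isLt]

lemma flip_ext_lt (hmn : m ≤ n) (x : Fin n → ℤˣ) (j : Fin m) :
    (fun j' : Fin m => flipCoord x (Fin.castLE hmn j) (Fin.castLE hmn j')) =
      flipCoord (fun j' => x (Fin.castLE hmn j')) j := by
  funext j'
  simp only [flipCoord, Function.update_apply, Fin.castLE_inj]

lemma flip_ext_ge (hmn : m ≤ n) (x : Fin n → ℤˣ) (i : Fin n) (h : ¬(i : ℕ) < m) :
    (fun j' : Fin m => flipCoord x i (Fin.castLE hmn j')) =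
      fun j' => x (Fin.castLE hmn j') := by
  funext j'
  have : Fin.castLE hmn j' ≠ i := by
    intro hc
    apply h
    rw [← hc]
    exact j'.isLt
  simp [flipCoord, Function.update_of_ne this]

lemma isKFun_ext (hmn : m ≤ n) {k : ℕ} {f : (Fin m → ℤˣ) → ℤˣ} (hf : IsKFun k f) :
    IsKFun k (extFun hmn f) := by
  intro x
  have himg : {i : Fin n | extFun hmn f (flipCoord x i) ≠ extFun hmn f x} =
      (Fin.castLE hmn) '' {j : Fin m |
        f (flipCoord (fun j' => x (Fin.castLE hmn j')) j) ≠ f (fun j' => x (Fin.castLE hmn j'))} := by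
    ext i
    simp only [Set.mem_setOf_eq, Set.mem_image]
    constructor
    · intro hi
      have hlt : (i : ℕ) < m := by
        by_contra hge
        apply hi
        show f _ = f _
        rw [flip_ext_ge hmn x i hge]
      refine ⟨⟨i, hlt⟩, ?_, rfl⟩
      have hei : Fin.castLE hmn ⟨i, hlt⟩ = i := rfl
      rw [← flip_ext_lt hmn x ⟨i, hlt⟩, hei]
      exact hi
    · rintro ⟨j, hj, rfl⟩
      show f _ ≠ f _
      rw [flip_ext_lt hmn x j]
      exact hj
  rw [himg, Set.ncard_image_of_injective _ (Fin.castLE_injective hmn)]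
  exact hf _

lemma insens_extFun_of_ge (hmn : m ≤ n) (f : (Fin m → ℤˣ) → ℤˣ) (i : Fin n)
    (h : ¬(i : ℕ) < m) : Insens (extFun hmn f) i := by
  intro v
  show f _ = f _
  rw [flip_ext_ge hmn v i h]

lemma insens_extFun_iff (hmn : m ≤ n) (f : (Fin m → ℤˣ) → ℤˣ) (j : Fin m) :
    Insens (extFun hmn f) (Fin.castLE hmn j) ↔ Insens f j := by
  constructor
  · intro hF w
    have h2 := hF (extPt hmn w)
    simp only [extFun] at h2
    rwa [flip_ext_lt hmn, extPt_comp hmn w] at h2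
  · intro hf v
    show f _ = f _
    rw [flip_ext_lt hmn]
    exact hf _

/-- extension preserves isomorphism. -/
lemma isomU_extFun (hmn : m ≤ n) {f g : (Fin m → ℤˣ) → ℤˣ} (h : IsomU f g) :
    IsomU (extFun hmn f) (extFun hmn g) := by
  classical
  obtain ⟨ε, α, σ, h⟩ := h
  let e : Fin m ≃ {i : Fin n // (i : ℕ) < m} :=
    { toFun := fun j => ⟨Fin.castLE hmn j, j.isLt⟩
      invFun := fun i => ⟨i.1.1, i.2⟩
      left_inv := fun j => rfl
      right_inv := fun i => rfl }
  refine ⟨ε, fun i => if h : (i : ℕ) < m then α ⟨i, h⟩ else 1,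
    σ.extendDomain e, fun x => ?_⟩
  show f _ = ε * g _
  rw [h (fun j => x (Fin.castLE hmn j))]
  congr 1
  congr 1
  funext j
  have h1 : σ.extendDomain e (Fin.castLE hmn j) = Fin.castLE hmn (σ j) :=
    Equiv.Perm.extendDomain_apply_image σ e j
  have h2 : ((Fin.castLE hmn j : Fin n) : ℕ) < m := j.isLt
  dsimp only
  rw [h1, dif_pos h2]
  rfl

/-- the key converse: if the extensions are isomorphic, so are the originals. -/
lemma isomU_of_extFun (hmn : m ≤ n) {f g : (Fin m → ℤˣ) → ℤˣ}
    (h : IsomU (extFun hmn f) (extFun hmn g)) : IsomU f g := by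
  classical
  obtain ⟨ε, α, σ, h⟩ := h
  have h' : ∀ x, extFun hmn f x = ε * extFun hmn g (ymap α σ x) := h
  -- sensitive coordinates transfer
  have key : ∀ l : Fin n, Insens (extFun hmn f) (σ l) ↔ Insens (extFun hmn g) l :=
    insens_transfer h'
  -- the equivalence between sensitive sets
  have toFun_lt : ∀ j : Fin m, ¬ Insens g j → ((σ (Fin.castLE hmn j) : Fin n) : ℕ) < m := by
    intro j hj
    by_contra hge
    exact hj ((insens_extFun_iff hmn g j).mp
      ((key (Fin.castLE hmn j)).mp (insens_extFun_of_ge hmn f _ hge)))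
  have toFun_sens : ∀ (j : Fin m) (hj : ¬ Insens g j),
      ¬ Insens f (Fin.castLT (σ (Fin.castLE hmn j)) (toFun_lt j hj)) := by
    intro j hj hf
    apply hj
    have hcast : Fin.castLE hmn (Fin.castLT (σ (Fin.castLE hmn j)) (toFun_lt j hj)) =
        σ (Fin.castLE hmn j) := rfl
    have := (insens_extFun_iff hmn f _).mpr hf
    rw [hcast] at this
    exact (insens_extFun_iff hmn g j).mp ((key (Fin.castLE hmn j)).mp this)
  have invFun_lt : ∀ i : Fin m, ¬ Insens f i → ((σ.symm (Fin.castLE hmn i) : Fin n) : ℕ) < m := by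
    intro i hi
    by_contra hge
    apply hi
    apply (insens_extFun_iff hmn f i).mp
    have : Insens (extFun hmn g) (σ.symm (Fin.castLE hmn i)) :=
      insens_extFun_of_ge hmn g _ hge
    have h2 := (key (σ.symm (Fin.castLE hmn i))).mpr this
    rwa [Equiv.apply_symm_apply] at h2
  have invFun_sens : ∀ (i : Fin m) (hi : ¬ Insens f i),
      ¬ Insens g (Fin.castLT (σ.symm (Fin.castLE hmn i)) (invFun_lt i hi)) := by
    intro i hi hg
    apply hi
    apply (insens_extFun_iff hmn f i).mp
    have hcast : Fin.castLE hmn (Fin.castLT (σ.symm (Fin.castLE hmn i)) (invFun_lt i hi)) =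
        σ.symm (Fin.castLE hmn i) := rfl
    have := (insens_extFun_iff hmn g _).mpr hg
    rw [hcast] at this
    have h2 := (key (σ.symm (Fin.castLE hmn i))).mpr this
    rwa [Equiv.apply_symm_apply] at h2
  let e : {j : Fin m // ¬ Insens g j} ≃ {j : Fin m // ¬ Insens f j} :=
    { toFun := fun j => ⟨Fin.castLT (σ (Fin.castLE hmn j.1)) (toFun_lt j.1 j.2),
        toFun_sens j.1 j.2⟩
      invFun := fun i => ⟨Fin.castLT (σ.symm (Fin.castLE hmn i.1)) (invFun_lt i.1 i.2),
        invFun_sens i.1 i.2⟩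
      left_inv := by
        rintro ⟨j, hj⟩
        apply Subtype.ext
        apply Fin.ext
        show ((σ.symm (Fin.castLE hmn (Fin.castLT (σ (Fin.castLE hmn j)) _)) : Fin n) : ℕ) = (j : ℕ)
        have : Fin.castLE hmn (Fin.castLT (σ (Fin.castLE hmn j)) (toFun_lt j hj)) =
            σ (Fin.castLE hmn j) := rfl
        rw [this, Equiv.symm_apply_apply]
        rfl
      right_inv := by
        rintro ⟨i, hi⟩
        apply Subtype.ext
        apply Fin.ext
        show ((σ (Fin.castLE hmn (Fin.castLT (σ.symm (Fin.castLE hmn i)) _)) : Fin n) : ℕ) = (i : ℕ)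
        have : Fin.castLE hmn (Fin.castLT (σ.symm (Fin.castLE hmn i)) (invFun_lt i hi)) =
            σ.symm (Fin.castLE hmn i) := rfl
        rw [this, Equiv.apply_symm_apply]
        rfl }
  let τ : Equiv.Perm (Fin m) := e.extendSubtype
  refine ⟨ε, fun j => α (Fin.castLE hmn j), τ, fun x => ?_⟩
  have h1 : f x = ε * g (fun j => ymap α σ (extPt hmn x) (Fin.castLE hmn j)) := by
    have h2 := h' (extPt hmn x)
    simp only [extFun] at h2
    rwa [extPt_comp hmn x] at h2
  rw [h1]
  congr 1
  apply agree
  intro j hj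
  by_contra hsens
  apply hj
  have hτ : τ j = Fin.castLT (σ (Fin.castLE hmn j)) (toFun_lt j hsens) := by
    show e.extendSubtype j = _
    rw [Equiv.extendSubtype_apply_of_mem e j hsens]
    rfl
  show α (Fin.castLE hmn j) * extPt hmn x (σ (Fin.castLE hmn j)) =
    α (Fin.castLE hmn j) * x (τ j)
  rw [hτ]
  congr 1
  simp [extPt, toFun_lt j hsens]
  rfl

end KFunAux

/-- The sequence `(G(n,k))_{n ≥ k}` is increasing in `n`. -/


theorem numIsoKFun_mono (k m n : ℕ) (hkm : k ≤ m) (hmn : m ≤ n) :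
    numIsoKFun m k ≤ numIsoKFun n k := by
  classical
  let Rm := fun (f g : {f : (Fin m → ℤˣ) → ℤˣ // IsKFun k f}) =>
    Isom (toReal f.1) (toReal g.1)
  let Rn := fun (f g : {f : (Fin n → ℤˣ) → ℤˣ // IsKFun k f}) =>
    Isom (toReal f.1) (toReal g.1)
  let E : {f : (Fin m → ℤˣ) → ℤˣ // IsKFun k f} → {f : (Fin n → ℤˣ) → ℤˣ // IsKFun k f} :=
    fun f => ⟨KFunAux.extFun hmn f.1, KFunAux.isKFun_ext hmn f.2⟩
  have hresp : ∀ a b, Rm a b → Rn (E a) (E b) := fun a b hab =>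
    (KFunAux.isom_iff _ _).mpr (KFunAux.isomU_extFun hmn ((KFunAux.isom_iff _ _).mp hab))
  let Q : Quot Rm → Quot Rn := Quot.map E hresp
  have hequivn : Equivalence Rn := by
    constructor
    · intro a
      exact (KFunAux.isom_iff _ _).mpr (KFunAux.isomU_refl _)
    · intro a b hab
      exact (KFunAux.isom_iff _ _).mpr (KFunAux.isomU_symm ((KFunAux.isom_iff _ _).mp hab))
    · intro a b c h1 h2
      exact (KFunAux.isom_iff _ _).mpr (KFunAux.isomU_trans
        ((KFunAux.isom_iff _ _).mp h1) ((KFunAux.isom_iff _ _).mp h2))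
  have hinj : Function.Injective Q := by
    intro x y
    induction x using Quot.ind with | _ a =>
    induction y using Quot.ind with | _ b =>
    intro hQ
    have h1 : Relation.EqvGen Rn (E a) (E b) := Quot.eq.mp hQ
    have h2 : Rn (E a) (E b) := (hequivn.eqvGen_iff).mp h1
    exact Quot.sound ((KFunAux.isom_iff _ _).mpr
      (KFunAux.isomU_of_extFun hmn ((KFunAux.isom_iff _ _).mp h2)))
  exact Nat.card_le_card_of_injective Q hinj
end

section
/- For every integer k ≥ 0, the sequence (G(n,k))_{n≥k} is eventually constant: there exists an integer N ≥ k such that G(n,k) = G(N,k) for all integers n ≥ N. -/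
/-!
Simon's argument bounds the number of relevant coordinates of a `k`-function `f` on `Q_n`.
If direction `i` is relevant, the set of vertices `x` with `f (x^i) ≠ f x` is nonempty and has
minimum degree at least `n + 1 - 2k` inside the cube (a neighbour `x^j` stays in it unless `j`
is sensitive at `x` or at `x^i`), so it has at least `2 ^ (n + 1 - 2k)` elements; these sets
have total size `k * 2 ^ n`. Hence once `k * 4 ^ k < 2 * n` some coordinate is irrelevant, every
`k`-function on `Q_{n+1}` is isomorphic to one ignoring its first coordinate, and adding a dummy
first coordinate is a bijection between isomorphism classes on `Q_n` and on `Q_{n+1}`. It is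
injective because an isomorphism between two functions ignoring the first coordinate can be
composed with the swap of two irrelevant coordinates so that it fixes the first one.
-/

open Finset Function

section Sensitivity

variable {n : ℕ} {β : Type*}

@[simp]
lemma flipCoord_apply_self (x : Fin n → ℤˣ) (i : Fin n) : flipCoord x i i = -x i := by
  simp [flipCoord]

lemma flipCoord_apply_of_ne (x : Fin n → ℤˣ) {i j : Fin n} (h : j ≠ i) :
    flipCoord x i j = x j := by
  simp [flipCoord, h]

@[simp]
lemma flipCoord_flipCoord (x : Fin n → ℤˣ) (i : Fin n) : flipCoord (flipCoord x i) i = x := by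
  simp [flipCoord]

lemma flipCoord_comm (x : Fin n → ℤˣ) {i j : Fin n} (h : i ≠ j) :
    flipCoord (flipCoord x i) j = flipCoord (flipCoord x j) i := by
  simp only [flipCoord, update_of_ne h.symm, update_of_ne h, update_comm h]

def IsRelevant (f : (Fin n → ℤˣ) → β) (i : Fin n) : Prop :=
  ∃ x, f (flipCoord x i) ≠ f x

lemma apply_update_of_not_isRelevant {f : (Fin n → ℤˣ) → β} {i : Fin n}
    (hi : ¬IsRelevant f i) (x : Fin n → ℤˣ) (u : ℤˣ) : f (update x i u) = f x := by
  by_cases hu : u = x i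
  · rw [hu, update_eq_self]
  · rw [Int.units_ne_iff_eq_neg.1 hu]
    exact not_not.1 fun h => hi ⟨x, h⟩

lemma apply_comp_swap_of_not_isRelevant {f : (Fin n → ℤˣ) → β} {i j : Fin n}
    (hi : ¬IsRelevant f i) (hj : ¬IsRelevant f j) (x : Fin n → ℤˣ) :
    f (x ∘ Equiv.swap i j) = f x := by
  rw [Equiv.comp_swap_eq_update, apply_update_of_not_isRelevant hi,
    apply_update_of_not_isRelevant hj]

variable [DecidableEq β]

def sensCoords (f : (Fin n → ℤˣ) → β) (x : Fin n → ℤˣ) : Finset (Fin n) :=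
  {i | f (flipCoord x i) ≠ f x}

@[simp]
lemma mem_sensCoords {f : (Fin n → ℤˣ) → β} {x : Fin n → ℤˣ} {i : Fin n} :
    i ∈ sensCoords f x ↔ f (flipCoord x i) ≠ f x := by
  simp [sensCoords]

lemma isKFun_iff_card_sensCoords {k : ℕ} {f : (Fin n → ℤˣ) → β} :
    IsKFun k f ↔ ∀ x, #(sensCoords f x) = k := by
  simp [IsKFun, sensCoords, ← Set.ncard_coe_finset]

end Sensitivity

section SimonBound

variable {n : ℕ}

lemma le_card_neighbors_filter {A : Finset (Fin n → ℤˣ)} {p : (Fin n → ℤˣ) → Prop}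
    [DecidablePred p] {i : Fin n} (hp : ∀ y j, j ≠ i → (p (flipCoord y j) ↔ p y)) {d : ℕ}
    (hdeg : ∀ x ∈ A, d + 1 ≤ #{j | flipCoord x j ∈ A}) :
    ∀ y ∈ A.filter p, d ≤ #{j | flipCoord y j ∈ A.filter p} := by
  intro y hy
  rw [mem_filter] at hy
  have hsub : ({j | flipCoord y j ∈ A} : Finset (Fin n)) ⊆
      insert i ({j | flipCoord y j ∈ A.filter p} : Finset (Fin n)) := by
    intro j hj
    by_cases hji : j = i
    · simp [hji]
    · simp_all
  have := (hdeg y hy.1).trans ((card_le_card hsub).trans (card_insert_le _ _))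
  omega

theorem two_pow_le_card_of_le_card_neighbors {d : ℕ} {A : Finset (Fin n → ℤˣ)}
    (hA : A.Nonempty) (hdeg : ∀ x ∈ A, d ≤ #{i | flipCoord x i ∈ A}) : 2 ^ d ≤ #A := by
  induction d generalizing A with
  | zero => simpa using hA.card_pos
  | succ d ih =>
    -- Split `A` along the direction `i` of an edge inside `A`: both halves are nonempty and
    -- each vertex loses at most its `i`-neighbour.
    obtain ⟨x, hx⟩ := hA
    obtain ⟨i, hi⟩ : ∃ i, flipCoord x i ∈ A := by
      simpa [Finset.Nonempty] using card_pos.1 (d.succ_pos.trans_le (hdeg x hx))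
    have hp (y : Fin n → ℤˣ) (j : Fin n) (h : j ≠ i) : flipCoord y j i = x i ↔ y i = x i := by
      rw [flipCoord_apply_of_ne y h.symm]
    have h₁ : 2 ^ d ≤ #{y ∈ A | y i = x i} :=
      ih ⟨x, by simp [hx]⟩ (le_card_neighbors_filter hp hdeg)
    have h₂ : 2 ^ d ≤ #{y ∈ A | ¬y i = x i} :=
      ih ⟨flipCoord x i, by simp [hi, neg_units_ne_self]⟩
        (le_card_neighbors_filter (fun y j h => (hp y j h).not) hdeg)
    rw [pow_succ, ← card_filter_add_card_filter_not (· i = x i)]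
    omega

variable {β : Type*} [DecidableEq β] {k : ℕ} {f : (Fin n → ℤˣ) → β}

lemma sum_card_flipCoord_ne (hf : IsKFun k f) :
    ∑ i, #{x | f (flipCoord x i) ≠ f x} = k * 2 ^ n := by
  have h := sum_card_bipartiteAbove_eq_sum_card_bipartiteBelow
    (s := univ) (t := univ) (fun i (x : Fin n → ℤˣ) => f (flipCoord x i) ≠ f x)
  simp only [bipartiteAbove, bipartiteBelow] at h
  simpa [mul_comm] using h.trans (sum_congr rfl fun x _ => isKFun_iff_card_sensCoords.1 hf x)

lemma two_pow_le_card_flipCoord_ne (hf : IsKFun k f) {i : Fin n} (hi : IsRelevant f i) :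
    2 ^ (n + 1 - 2 * k) ≤ #{x | f (flipCoord x i) ≠ f x} := by
  rw [isKFun_iff_card_sensCoords] at hf
  obtain ⟨x₀, hx₀⟩ := hi
  refine two_pow_le_card_of_le_card_neighbors ⟨x₀, by simpa using hx₀⟩ fun x hx => ?_
  rw [mem_filter] at hx
  set N : Finset (Fin n) := {j | flipCoord x j ∈ ({x | f (flipCoord x i) ≠ f x} : Finset _)}
  set U := sensCoords f x ∪ sensCoords f (flipCoord x i)
  have hcover : N ∪ U = univ := by
    refine eq_univ_of_forall fun j => ?_
    rw [mem_union, or_iff_not_imp_right]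
    intro hj
    simp only [U, mem_union, mem_sensCoords, not_or, not_not] at hj
    have hij : i ≠ j := by rintro rfl; exact hx.2 (by simpa using hj.2.symm)
    simpa [N, ← flipCoord_comm x hij, hj.1, hj.2] using hx.2
  have hiN : i ∈ N ∩ U := by simp [N, U, hx.2, Ne.symm hx.2]
  have hU : #U ≤ 2 * k := (card_union_le _ _).trans (by rw [hf, hf]; omega)
  have hNU := card_union_add_card_inter N U
  rw [hcover, card_univ, Fintype.card_fin] at hNU
  have := card_pos.2 ⟨i, hiN⟩
  omega

theorem exists_not_isRelevant (hf : IsKFun k f) (hn : k * 4 ^ k < 2 * n) :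
    ∃ i, ¬IsRelevant f i := by
  by_contra! hrel
  have hsum : n * 2 ^ (n + 1 - 2 * k) ≤ k * 2 ^ n := calc
    n * 2 ^ (n + 1 - 2 * k) = ∑ _i : Fin n, 2 ^ (n + 1 - 2 * k) := by simp
    _ ≤ ∑ i, #{x | f (flipCoord x i) ≠ f x} :=
      sum_le_sum fun i _ => two_pow_le_card_flipCoord_ne hf (hrel i)
    _ = k * 2 ^ n := sum_card_flipCoord_ne hf
  have : 2 * n * 2 ^ n ≤ k * 4 ^ k * 2 ^ n := calc
    2 * n * 2 ^ n = n * 2 ^ (n + 1) := by ring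
    _ ≤ n * 2 ^ (n + 1 - 2 * k + 2 * k) :=
      Nat.mul_le_mul_left _ (Nat.pow_le_pow_right two_pos (by omega))
    _ = n * 2 ^ (n + 1 - 2 * k) * 4 ^ k := by rw [pow_add, pow_mul]; ring
    _ ≤ k * 2 ^ n * 4 ^ k := Nat.mul_le_mul_right _ hsum
    _ = k * 4 ^ k * 2 ^ n := by ring
  exact absurd (Nat.le_of_mul_le_mul_right this (by positivity)) (not_le.2 hn)

end SimonBound

section Isomorphism

variable {n : ℕ}

def cubeAut (α : Fin n → ℤˣ) (σ : Equiv.Perm (Fin n)) (x : Fin n → ℤˣ) : Fin n → ℤˣ :=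
  fun i => α i * x (σ i)

lemma cubeAut_cubeAut (α β : Fin n → ℤˣ) (σ τ : Equiv.Perm (Fin n)) (x : Fin n → ℤˣ) :
    cubeAut β τ (cubeAut α σ x) = cubeAut (fun i => β i * α (τ i)) (σ * τ) x := by
  funext i
  simp [cubeAut, mul_assoc]

lemma cubeAut_cubeAut_inv (α : Fin n → ℤˣ) (σ : Equiv.Perm (Fin n)) (y : Fin n → ℤˣ) :
    cubeAut α σ (cubeAut (fun i => α (σ⁻¹ i)) σ⁻¹ y) = y := by
  funext i
  simp [cubeAut, ← mul_assoc, Int.units_mul_self]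

lemma cubeAut_flipCoord_apply (α : Fin n → ℤˣ) (σ : Equiv.Perm (Fin n)) (x : Fin n → ℤˣ)
    (j : Fin n) : cubeAut α σ (flipCoord x (σ j)) = flipCoord (cubeAut α σ x) j := by
  funext i
  by_cases h : i = j
  · subst h
    simp [cubeAut]
  · simp [cubeAut, flipCoord_apply_of_ne _ h, flipCoord_apply_of_ne _ (σ.injective.ne h)]

def IsomUnits (f g : (Fin n → ℤˣ) → ℤˣ) : Prop :=
  ∃ (ε : ℤˣ) (α : Fin n → ℤˣ) (σ : Equiv.Perm (Fin n)), ∀ x, f x = ε * g (cubeAut α σ x)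

lemma isom_toReal_iff {f g : (Fin n → ℤˣ) → ℤˣ} :
    Isom (toReal f) (toReal g) ↔ IsomUnits f g := by
  simp only [Isom, IsomUnits, toReal, ← Int.cast_mul, Int.cast_inj, ← Units.val_mul,
    Units.val_inj]
  rfl

lemma isomUnits_equivalence : Equivalence (@IsomUnits n) where
  refl f := ⟨1, 1, 1, fun x => by rw [one_mul]; congr 1; ext; simp [cubeAut]⟩
  symm := by
    rintro f g ⟨ε, α, σ, h⟩
    refine ⟨ε, fun i => α (σ⁻¹ i), σ⁻¹, fun y => ?_⟩
    rw [h, cubeAut_cubeAut_inv, ← mul_assoc, Int.units_mul_self, one_mul]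
  trans := by
    rintro f g h ⟨ε, α, σ, hfg⟩ ⟨δ, β, τ, hgh⟩
    exact ⟨ε * δ, fun i => β i * α (τ i), σ * τ, fun x => by
      rw [hfg, hgh, cubeAut_cubeAut, mul_assoc]⟩

variable {f g : (Fin n → ℤˣ) → ℤˣ} {ε : ℤˣ} {α : Fin n → ℤˣ} {σ : Equiv.Perm (Fin n)}

lemma apply_mem_sensCoords_iff (h : ∀ x, f x = ε * g (cubeAut α σ x)) (x : Fin n → ℤˣ)
    (j : Fin n) : σ j ∈ sensCoords f x ↔ j ∈ sensCoords g (cubeAut α σ x) := by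
  simp [h, cubeAut_flipCoord_apply]

lemma isRelevant_apply_iff (h : ∀ x, f x = ε * g (cubeAut α σ x)) (j : Fin n) :
    IsRelevant f (σ j) ↔ IsRelevant g j := by
  constructor
  · rintro ⟨x, hx⟩
    exact ⟨cubeAut α σ x, mem_sensCoords.1 <| (apply_mem_sensCoords_iff h x j).1 (by simpa)⟩
  · rintro ⟨y, hy⟩
    refine ⟨cubeAut (fun i => α (σ⁻¹ i)) σ⁻¹ y, mem_sensCoords.1 ?_⟩
    rw [apply_mem_sensCoords_iff h, cubeAut_cubeAut_inv]
    simpa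

lemma isKFun_of_isomUnits {k : ℕ} (h : IsomUnits f g) (hg : IsKFun k g) : IsKFun k f := by
  obtain ⟨ε, α, σ, h⟩ := h
  rw [isKFun_iff_card_sensCoords] at hg ⊢
  intro x
  have hmap : sensCoords f x = (sensCoords g (cubeAut α σ x)).map σ.toEmbedding := by
    ext j
    rw [mem_map_equiv, ← apply_mem_sensCoords_iff h, Equiv.apply_symm_apply]
  rw [hmap, card_map, hg]

end Isomorphism

section DummyCoordinate

variable {n : ℕ}

def withDummy {β : Type*} (f : (Fin n → ℤˣ) → β) : (Fin (n + 1) → ℤˣ) → β :=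
  fun y => f (Fin.tail y)

lemma tail_flipCoord_zero (y : Fin (n + 1) → ℤˣ) : Fin.tail (flipCoord y 0) = Fin.tail y := by
  simp [flipCoord, Fin.tail_update_zero]

lemma tail_flipCoord_succ (y : Fin (n + 1) → ℤˣ) (i : Fin n) :
    Fin.tail (flipCoord y i.succ) = flipCoord (Fin.tail y) i := by
  simp [flipCoord, Fin.tail_update_succ, Fin.tail]

lemma not_isRelevant_withDummy_zero {β : Type*} (f : (Fin n → ℤˣ) → β) :
    ¬IsRelevant (withDummy f) 0 := by
  rintro ⟨y, hy⟩
  simp [withDummy, tail_flipCoord_zero] at hy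

lemma sensCoords_withDummy {β : Type*} [DecidableEq β] (f : (Fin n → ℤˣ) → β)
    (y : Fin (n + 1) → ℤˣ) :
    sensCoords (withDummy f) y = (sensCoords f (Fin.tail y)).map (Fin.succEmb n) := by
  ext j
  cases j using Fin.cases <;>
    simp [withDummy, tail_flipCoord_zero, tail_flipCoord_succ, Fin.succ_ne_zero]

lemma isKFun_withDummy_iff {β : Type*} [DecidableEq β] {k : ℕ} {f : (Fin n → ℤˣ) → β} :
    IsKFun k (withDummy f) ↔ IsKFun k f := by
  simp only [isKFun_iff_card_sensCoords, sensCoords_withDummy, card_map]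
  exact ⟨fun h x => by simpa using h (Fin.cons 1 x), fun h y => h _⟩

lemma tail_cubeAut_decomposeFin_symm (α : Fin (n + 1) → ℤˣ) (p : Fin (n + 1))
    (e : Equiv.Perm (Fin n)) (y : Fin (n + 1) → ℤˣ) :
    Fin.tail (cubeAut α (Equiv.Perm.decomposeFin.symm (p, e)) y) =
      cubeAut (Fin.tail α) e (Fin.tail (y ∘ Equiv.swap 0 p)) := by
  funext i
  simp [cubeAut, Fin.tail, Equiv.Perm.decomposeFin_symm_apply_succ]

variable {f g : (Fin n → ℤˣ) → ℤˣ}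

lemma isomUnits_withDummy (h : IsomUnits f g) : IsomUnits (withDummy f) (withDummy g) := by
  obtain ⟨ε, α, σ, h⟩ := h
  refine ⟨ε, Fin.cons 1 α, Equiv.Perm.decomposeFin.symm (0, σ), fun y => ?_⟩
  simp [withDummy, tail_cubeAut_decomposeFin_symm, h]

lemma isomUnits_of_withDummy (h : IsomUnits (withDummy f) (withDummy g)) : IsomUnits f g := by
  obtain ⟨ε, α, σ, h⟩ := h
  obtain ⟨⟨p, e⟩, rfl⟩ := Equiv.Perm.decomposeFin.symm.surjective σ
  have hp : ¬IsRelevant (withDummy f) p := by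
    simpa [Equiv.Perm.decomposeFin_symm_apply_zero] using
      (isRelevant_apply_iff h 0).not.2 (not_isRelevant_withDummy_zero g)
  refine ⟨ε, Fin.tail α, e, fun z => ?_⟩
  calc f z = withDummy f (Fin.cons 1 z ∘ Equiv.swap 0 p) := by
        rw [apply_comp_swap_of_not_isRelevant (not_isRelevant_withDummy_zero f) hp]
        simp [withDummy]
    _ = ε * g (cubeAut (Fin.tail α) e z) := by
        rw [h, withDummy, tail_cubeAut_decomposeFin_symm]
        congr 3
        funext j
        simp [Fin.tail, Equiv.swap_apply_self]

lemma isomUnits_withDummy_comp_insertNth {F : (Fin (n + 1) → ℤˣ) → ℤˣ} {i : Fin (n + 1)}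
    (hi : ¬IsRelevant F i) : IsomUnits F (withDummy fun z => F (i.insertNth 1 z)) := by
  refine ⟨1, 1, i.cycleRange.symm, fun x => ?_⟩
  have hx : i.insertNth 1 (Fin.tail (cubeAut 1 i.cycleRange.symm x)) = update x i 1 := by
    rw [← Fin.insertNth_removeNth]
    congr 1
    funext j
    simp [cubeAut, Fin.tail, Fin.removeNth]
  simp [withDummy, hx, apply_update_of_not_isRelevant hi]

end DummyCoordinate

theorem numIsoKFun_succ_eq {n k : ℕ}
    (h : ∀ F : (Fin (n + 1) → ℤˣ) → ℤˣ, IsKFun k F → ∃ i, ¬IsRelevant F i) :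
    numIsoKFun (n + 1) k = numIsoKFun n k := by
  simp only [numIsoKFun, isom_toReal_iff]
  let addDummy (f : {f : (Fin n → ℤˣ) → ℤˣ // IsKFun k f}) :
      {F : (Fin (n + 1) → ℤˣ) → ℤˣ // IsKFun k F} :=
    ⟨withDummy f.1, isKFun_withDummy_iff.2 f.2⟩
  refine (Nat.card_eq_of_bijective (Quot.map addDummy fun _ _ => isomUnits_withDummy) ⟨?_, ?_⟩).symm
  · rintro ⟨f⟩ ⟨g⟩ hfg
    exact Quot.sound <| isomUnits_of_withDummy <|
      (isomUnits_equivalence.comap Subtype.val).eqvGen_iff.1 (Quot.eq.1 hfg)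
  · rintro ⟨F, hF⟩
    obtain ⟨i, hi⟩ := h F hF
    have hiso := isomUnits_equivalence.symm (isomUnits_withDummy_comp_insertNth hi)
    exact ⟨Quot.mk _ ⟨_, isKFun_withDummy_iff.1 (isKFun_of_isomUnits hiso hF)⟩, Quot.sound hiso⟩

/-- The sequence `(G(n,k))_{n ≥ k}` is eventually constant. -/
theorem numIsoKFun_eventually_const (k : ℕ) :
    ∃ N : ℕ, k ≤ N ∧ ∀ n : ℕ, N ≤ n → numIsoKFun n k = numIsoKFun N k := by
  refine ⟨k * 4 ^ k, Nat.le_mul_of_pos_right k (by positivity), fun n hn => ?_⟩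
  induction n, hn using Nat.le_induction with
  | base => rfl
  | succ n hn ih =>
    rw [numIsoKFun_succ_eq fun F hF => exists_not_isRelevant hF (by omega), ih]
end

section
/- For every integer k ≥ 2, G(3·2^{k-1}−3, k) < G(3·2^{k-1}−2, k). (Thus the sequence (G(n,k))_{n≥k} is not yet constant at 3·2^{k-1}−3, i.e. n(k) ≥ 3·2^{k-1}−2.) -/
/-!
Adding a dummy coordinate, `f ↦ f ∘ Fin.tail`, maps isomorphism classes of `k`-functions on
`Q_n` injectively to those on `Q_(n+1)`, and no `k`-function on `Q_(n+1)` all of whose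
coordinates are relevant lies in the image. Such a function exists in dimension
`3·2^(k-1) - 2`: start from `x ↦ x₀` on `Q_1` and iterate the doubling on
`Q_n × Q_n × Q_2` that sends `(u, v, a)` to `a₀ · f u` if `f u = f v` and to `a₁ · f u`
otherwise; it turns a `k`-function into a `(k+1)`-function. At every vertex exactly one of the
two control coordinates is sensitive, and the `k` sensitive coordinates of `f` are contributed
by the `u`-block if `a₀ = a₁` and by the `v`-block otherwise.
-/
lemma flipCoord_comp_of_injective {m n : ℕ} {e : Fin m → Fin n} (he : Function.Injective e)
    (x : Fin n → ℤˣ) (i : Fin m) : flipCoord x (e i) ∘ e = flipCoord (x ∘ e) i :=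
  Function.update_comp_eq_of_injective x he i _

lemma flipCoord_comp_of_forall_ne {m n : ℕ} {e : Fin m → Fin n} {p : Fin n} (hp : ∀ i, e i ≠ p)
    (x : Fin n → ℤˣ) : flipCoord x p ∘ e = x ∘ e :=
  Function.update_comp_eq_of_forall_ne x _ hp

lemma flipCoord_signedPerm {n : ℕ} (α : Fin n → ℤˣ) (σ : Equiv.Perm (Fin n))
    (x : Fin n → ℤˣ) (j : Fin n) :
    (fun i => α i * flipCoord x (σ j) (σ i)) = flipCoord (fun i => α i * x (σ i)) j := by
  funext i
  by_cases hij : i = j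
  · subst hij; simp [flipCoord]
  · simp [flipCoord, Function.update_of_ne hij, Function.update_of_ne (σ.injective.ne hij)]

lemma toReal_apply_eq_iff {n : ℕ} {f g : (Fin n → ℤˣ) → ℤˣ} {x y : Fin n → ℤˣ} :
    toReal f x = toReal g y ↔ f x = g y := by
  simp [toReal, Units.ext_iff]

lemma Int.cast_units_mul_self (ε : ℤˣ) : ((ε : ℤ) : ℝ) * ((ε : ℤ) : ℝ) = 1 := by
  rw [← Int.cast_mul, ← Units.val_mul, Int.units_mul_self]; simp

lemma exists_tail_eq_and_apply_zero_eq {n : ℕ} (u : Fin n → ℤˣ) (p : Fin (n + 1)) :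
    ∃ x : Fin (n + 1) → ℤˣ, Fin.tail x = u ∧ x 0 = x p := by
  cases p using Fin.cases with
  | zero => exact ⟨Fin.cons 1 u, Fin.tail_cons _ _, rfl⟩
  | succ q => exact ⟨Fin.cons (u q) u, Fin.tail_cons _ _, rfl⟩

namespace Isom

variable {n : ℕ} {f g h : (Fin n → ℤˣ) → ℝ}

protected lemma refl (f : (Fin n → ℤˣ) → ℝ) : Isom f f :=
  ⟨1, fun _ => 1, 1, fun x => by simp⟩

protected lemma symm (hfg : Isom f g) : Isom g f := by
  obtain ⟨ε, α, σ, hfg⟩ := hfg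
  refine ⟨ε, fun i => α (σ.symm i), σ.symm, fun y => ?_⟩
  have hy : (fun i => α i * (α (σ.symm (σ i)) * y (σ.symm (σ i)))) = y := by
    funext i; simp [← mul_assoc, Int.units_mul_self]
  rw [hfg, hy, ← mul_assoc, Int.cast_units_mul_self, one_mul]

protected lemma trans (hfg : Isom f g) (hgh : Isom g h) : Isom f h := by
  obtain ⟨ε, α, σ, hfg⟩ := hfg
  obtain ⟨δ, β, τ, hgh⟩ := hgh
  refine ⟨ε * δ, fun i => β i * α (τ i), τ.trans σ, fun x => ?_⟩
  rw [hfg, hgh]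
  simp [mul_assoc]

lemma equivalence (n : ℕ) : Equivalence (@Isom n) :=
  ⟨Isom.refl, Isom.symm, Isom.trans⟩

lemma comp_tail (hfg : Isom f g) : Isom (f ∘ Fin.tail) (g ∘ Fin.tail) := by
  obtain ⟨ε, α, σ, hfg⟩ := hfg
  refine ⟨ε, Fin.cons 1 α, Equiv.Perm.decomposeFin.symm (0, σ), fun x => ?_⟩
  simp only [Function.comp_apply, hfg]
  congr 2

lemma of_comp_tail (hfg : Isom (f ∘ Fin.tail) (g ∘ Fin.tail)) : Isom f g := by
  obtain ⟨ε, α, σ, hfg⟩ := hfg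
  obtain ⟨⟨p, e⟩, rfl⟩ := Equiv.Perm.decomposeFin.symm.surjective σ
  refine ⟨ε, Fin.tail α, e, fun u => ?_⟩
  -- A lift `x` of `u` with `x 0 = x p` does not see the swap hidden in `σ`.
  obtain ⟨x, rfl, hx⟩ := exists_tail_eq_and_apply_zero_eq u p
  have hswap : ∀ i, x (Equiv.swap 0 p i) = x i := fun i => by
    rcases eq_or_ne i 0 with rfl | h0
    · simp [hx]
    rcases eq_or_ne i p with rfl | hp
    · simp [hx]
    · rw [Equiv.swap_apply_of_ne_of_ne h0 hp]
  refine (hfg x).trans (congrArg _ (congrArg g ?_))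
  funext i
  simp [Fin.tail, hswap]

end Isom

lemma IsKFun.comp_tail {n k : ℕ} {β : Type*} {f : (Fin n → ℤˣ) → β} (hf : IsKFun k f) :
    IsKFun k (f ∘ Fin.tail) := by
  intro x
  have hsens : {i | (f ∘ Fin.tail) (flipCoord x i) ≠ (f ∘ Fin.tail) x} =
      Fin.succ '' {j | f (flipCoord (Fin.tail x) j) ≠ f (Fin.tail x)} := by
    ext i
    cases i using Fin.cases with
    | zero => simp [flipCoord, Fin.tail_update_zero, Fin.succ_ne_zero]
    | succ j => simp [flipCoord, Fin.tail_update_succ, Fin.tail]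
  rw [hsens, Set.ncard_image_of_injective _ (Fin.succ_injective n)]
  exact hf _

def AllCoordsRelevant {n : ℕ} {β : Type*} (f : (Fin n → ℤˣ) → β) : Prop :=
  ∀ i, ∃ x, f (flipCoord x i) ≠ f x

lemma AllCoordsRelevant.not_isom_comp_tail {n : ℕ} {F : (Fin (n + 1) → ℤˣ) → ℤˣ}
    (hF : AllCoordsRelevant F) (g : (Fin n → ℤˣ) → ℤˣ) :
    ¬ Isom (toReal F) (toReal g ∘ Fin.tail) := by
  rintro ⟨ε, α, σ, h⟩
  obtain ⟨x, hx⟩ := hF (σ 0)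
  apply hx
  rw [← toReal_apply_eq_iff, h, h, Function.comp_apply, Function.comp_apply,
    flipCoord_signedPerm, flipCoord, Fin.tail_update_zero]

lemma Nat.card_lt_card_of_injective_of_notMem {α β : Type*} [Finite β] (f : α → β)
    (hf : Function.Injective f) {b : β} (hb : b ∉ Set.range f) : Nat.card α < Nat.card β := by
  have := Finite.of_injective f hf
  have := Fintype.ofFinite α
  have := Fintype.ofFinite β
  simp only [Nat.card_eq_fintype_card]
  exact Fintype.card_lt_of_injective_of_notMem f hf hb

theorem numIsoKFun_lt_succ {n k : ℕ} {F : (Fin (n + 1) → ℤˣ) → ℤˣ} (hF : IsKFun k F)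
    (hrel : AllCoordsRelevant F) : numIsoKFun n k < numIsoKFun (n + 1) k := by
  have hequiv (m : ℕ) : Equivalence fun f g : {f : (Fin m → ℤˣ) → ℤˣ // IsKFun k f} =>
      Isom (toReal f.1) (toReal g.1) :=
    (Isom.equivalence m).comap _
  refine Nat.card_lt_card_of_injective_of_notMem
    (Quot.map (fun f => ⟨f.1 ∘ Fin.tail, f.2.comp_tail⟩) fun _ _ => Isom.comp_tail)
    ?_ (b := Quot.mk _ ⟨F, hF⟩) ?_
  · rintro ⟨f⟩ ⟨g⟩ hfg
    exact Quot.sound (Isom.of_comp_tail ((hequiv _).eqvGen_iff.mp (Quot.eqvGen_exact hfg)))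
  · rintro ⟨q, hq⟩
    obtain ⟨⟨g, _⟩, rfl⟩ := Quot.exists_rep q
    exact hrel.not_isom_comp_tail g ((hequiv _).eqvGen_iff.mp (Quot.eqvGen_exact hq)).symm

lemma Set.ncard_setOf_fin_add {m n : ℕ} (P : Fin (m + n) → Prop) :
    {i | P i}.ncard = {i | P (Fin.castAdd n i)}.ncard + {j | P (Fin.natAdd m j)}.ncard := by
  classical
  simp only [Set.ncard_eq_toFinset_card', Set.toFinset_ofPred, Finset.card_filter,
    Fin.sum_univ_add]

namespace Doubling

variable {n : ℕ}

def left (i : Fin n) : Fin (n + n + 2) := Fin.castAdd 2 (Fin.castAdd n i)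

def right (j : Fin n) : Fin (n + n + 2) := Fin.castAdd 2 (Fin.natAdd n j)

def ctrl (c : Fin 2) : Fin (n + n + 2) := Fin.natAdd (n + n) c

lemma left_injective : Function.Injective (left (n := n)) := by
  intro i j h; simpa [left, Fin.ext_iff] using h

lemma right_injective : Function.Injective (right (n := n)) := by
  intro i j h; simpa [right, Fin.ext_iff] using h

lemma ctrl_injective : Function.Injective (ctrl (n := n)) := by
  intro i j h; simpa [ctrl, Fin.ext_iff] using h

lemma left_ne_right (i j : Fin n) : left i ≠ right j :=
  Fin.ne_of_val_ne (by simp only [left, right, Fin.val_castAdd, Fin.val_natAdd]; omega)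

lemma left_ne_ctrl (i : Fin n) (c : Fin 2) : left i ≠ ctrl c :=
  Fin.ne_of_val_ne (by simp only [left, ctrl, Fin.val_castAdd, Fin.val_natAdd]; omega)

lemma right_ne_ctrl (j : Fin n) (c : Fin 2) : right j ≠ ctrl c :=
  Fin.ne_of_val_ne (by simp only [right, ctrl, Fin.val_castAdd, Fin.val_natAdd]; omega)

def vertex (u v : Fin n → ℤˣ) (a : Fin 2 → ℤˣ) : Fin (n + n + 2) → ℤˣ :=
  Fin.append (Fin.append u v) a

@[simp] lemma vertex_comp_left (u v : Fin n → ℤˣ) (a : Fin 2 → ℤˣ) :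
    vertex u v a ∘ left = u := by
  funext i; simp [vertex, left]

@[simp] lemma vertex_comp_right (u v : Fin n → ℤˣ) (a : Fin 2 → ℤˣ) :
    vertex u v a ∘ right = v := by
  funext j; simp only [vertex, right, Function.comp_apply, Fin.append_left, Fin.append_right]

@[simp] lemma vertex_ctrl (u v : Fin n → ℤˣ) (a : Fin 2 → ℤˣ) (c : Fin 2) :
    vertex u v a (ctrl c) = a c := by
  simp [vertex, ctrl]

def value (a : Fin 2 → ℤˣ) (s t : ℤˣ) : ℤˣ := a (if s = t then 0 else 1) * s

lemma value_ne_value_left_iff (a : Fin 2 → ℤˣ) (s s' t : ℤˣ) :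
    value a s' t ≠ value a s t ↔ s' ≠ s ∧ a 0 = a 1 := by
  revert a s s' t; unfold value; decide

lemma value_ne_value_right_iff (a : Fin 2 → ℤˣ) (s t t' : ℤˣ) :
    value a s t' ≠ value a s t ↔ t' ≠ t ∧ a 0 ≠ a 1 := by
  revert a s t t'; unfold value; decide

lemma value_flipCoord_ne_iff (a : Fin 2 → ℤˣ) (c : Fin 2) (s t : ℤˣ) :
    value (flipCoord a c) s t ≠ value a s t ↔ c = if s = t then 0 else 1 := by
  revert a c s t; unfold value flipCoord; decide

end Doubling

open Doubling

def doubling {n : ℕ} (f : (Fin n → ℤˣ) → ℤˣ) (x : Fin (n + n + 2) → ℤˣ) : ℤˣ :=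
  value (x ∘ ctrl) (f (x ∘ left)) (f (x ∘ right))

section DoublingSensitivity

variable {n : ℕ} (f : (Fin n → ℤˣ) → ℤˣ) (x : Fin (n + n + 2) → ℤˣ)

lemma doubling_flipCoord_left_ne_iff (i : Fin n) :
    doubling f (flipCoord x (left i)) ≠ doubling f x ↔
      f (flipCoord (x ∘ left) i) ≠ f (x ∘ left) ∧ x (ctrl 0) = x (ctrl 1) := by
  rw [doubling, flipCoord_comp_of_injective left_injective,
    flipCoord_comp_of_forall_ne (fun j => (left_ne_right i j).symm),
    flipCoord_comp_of_forall_ne (fun c => (left_ne_ctrl i c).symm)]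
  exact value_ne_value_left_iff ..

lemma doubling_flipCoord_right_ne_iff (j : Fin n) :
    doubling f (flipCoord x (right j)) ≠ doubling f x ↔
      f (flipCoord (x ∘ right) j) ≠ f (x ∘ right) ∧ x (ctrl 0) ≠ x (ctrl 1) := by
  rw [doubling, flipCoord_comp_of_injective right_injective,
    flipCoord_comp_of_forall_ne (fun i => left_ne_right i j),
    flipCoord_comp_of_forall_ne (fun c => (right_ne_ctrl j c).symm)]
  exact value_ne_value_right_iff ..

lemma doubling_flipCoord_ctrl_ne_iff (c : Fin 2) :
    doubling f (flipCoord x (ctrl c)) ≠ doubling f x ↔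
      c = if f (x ∘ left) = f (x ∘ right) then 0 else 1 := by
  rw [doubling, flipCoord_comp_of_injective ctrl_injective,
    flipCoord_comp_of_forall_ne (fun i => left_ne_ctrl i c),
    flipCoord_comp_of_forall_ne (fun j => right_ne_ctrl j c)]
  exact value_flipCoord_ne_iff ..

end DoublingSensitivity

lemma isKFun_doubling {n k : ℕ} {f : (Fin n → ℤˣ) → ℤˣ} (hf : IsKFun k f) :
    IsKFun (k + 1) (doubling f) := by
  intro x
  rw [Set.ncard_setOf_fin_add, Set.ncard_setOf_fin_add]
  change {i | doubling f (flipCoord x (left i)) ≠ _}.ncard +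
    {j | doubling f (flipCoord x (right j)) ≠ _}.ncard +
    {c | doubling f (flipCoord x (ctrl c)) ≠ _}.ncard = k + 1
  simp only [doubling_flipCoord_left_ne_iff, doubling_flipCoord_right_ne_iff,
    doubling_flipCoord_ctrl_ne_iff, Set.ofPred_eq_eq_singleton, Set.ncard_singleton]
  by_cases hc : x (ctrl 0) = x (ctrl 1)
  · simp [hc, hf (x ∘ left)]
  · simp [hc, hf (x ∘ right)]

lemma allCoordsRelevant_doubling {n : ℕ} {f : (Fin n → ℤˣ) → ℤˣ} (hf : AllCoordsRelevant f)
    {u v : Fin n → ℤˣ} (huv : f u ≠ f v) : AllCoordsRelevant (doubling f) := by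
  intro p
  cases p using Fin.addCases with
  | left q =>
    cases q using Fin.addCases with
    | left i =>
      obtain ⟨w, hw⟩ := hf i
      refine ⟨vertex w w ![1, 1], (doubling_flipCoord_left_ne_iff f _ i).mpr ?_⟩
      simpa using hw
    | right j =>
      obtain ⟨w, hw⟩ := hf j
      refine ⟨vertex w w ![1, -1], (doubling_flipCoord_right_ne_iff f _ j).mpr ?_⟩
      simpa using hw
  | right c =>
    fin_cases c
    · exact ⟨vertex u u ![1, 1], (doubling_flipCoord_ctrl_ne_iff f _ 0).mpr (by simp)⟩
    · exact ⟨vertex u v ![1, 1], (doubling_flipCoord_ctrl_ne_iff f _ 1).mpr (by simp [huv])⟩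

lemma exists_isKFun_allCoordsRelevant (j : ℕ) :
    ∃ F : (Fin (3 * 2 ^ j - 2) → ℤˣ) → ℤˣ, IsKFun (j + 1) F ∧ AllCoordsRelevant F := by
  induction j with
  | zero =>
    show ∃ F : (Fin 1 → ℤˣ) → ℤˣ, IsKFun 1 F ∧ AllCoordsRelevant F
    refine ⟨fun x => x 0, fun x => ?_, fun i => ⟨1, ?_⟩⟩
    all_goals simp [flipCoord, Fin.fin_one_eq_zero]
  | succ j ih =>
    obtain ⟨f, hf, hrel⟩ := ih
    have hpos : 0 < 3 * 2 ^ j - 2 := by have := Nat.one_le_two_pow (n := j); omega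
    obtain ⟨x, hx⟩ := hrel ⟨0, hpos⟩
    have hdim : 3 * 2 ^ (j + 1) - 2 = (3 * 2 ^ j - 2) + (3 * 2 ^ j - 2) + 2 := by
      rw [pow_succ]; omega
    rw [hdim]
    exact ⟨doubling f, isKFun_doubling hf, allCoordsRelevant_doubling hrel hx⟩

/-- For `k ≥ 2`, the sequence `(G(n,k))` is not yet constant at `3·2^(k-1) - 3`. -/
theorem numIsoKFun_strict_increase (k : ℕ) (hk : 2 ≤ k) :
    numIsoKFun (3 * 2 ^ (k - 1) - 3) k < numIsoKFun (3 * 2 ^ (k - 1) - 2) k := by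
  have hdim : 3 * 2 ^ (k - 1) - 2 = 3 * 2 ^ (k - 1) - 3 + 1 := by
    have := Nat.one_le_two_pow (n := k - 1); omega
  have hexists := exists_isKFun_allCoordsRelevant (k - 1)
  rw [Nat.sub_add_cancel (by omega : 1 ≤ k), hdim] at hexists
  obtain ⟨F, hF, hrel⟩ := hexists
  rw [hdim]
  exact numIsoKFun_lt_succ hF hrel
end

section
/- Let 0 ≤ m ≤ n be integers and let f and g be real-valued functions on Q_m. Let F and G be their extensions to Q_n defined by F(x) = f(x_1,…,x_m) and G(x) = g(x_1,…,x_m) for x ∈ {-1,1}^n. Then f and g are isomorphic as functions on Q_m if and only if F and G are isomorphic as functions on Q_n. -/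
/-! Extending `σ` by the identity on the new coordinates turns an isomorphism of `f` and `g` into
one of their extensions. Conversely, if the extensions are isomorphic via `σ`, then `g` depends
only on the coordinates `i` that `σ` sends back into the first `m`, and any permutation of
`Fin m` agreeing with `σ` there yields an isomorphism of `f` and `g`. -/

open Function

theorem Equiv.Perm.exists_apply_eq_of_mem_range {α β : Type*} [Finite α] (e : α ↪ β) {φ : α → β}
    (hφ : Injective φ) : ∃ τ : Equiv.Perm α, ∀ i, φ i ∈ Set.range e → e (τ i) = φ i := by
  classical
  let S := {i // φ i ∈ Set.range e}
  let ψ (i : S) : α := (Equiv.ofInjective e e.injective).symm ⟨φ i, i.2⟩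
  have hinv (i : S) : e (ψ i) = φ i := Equiv.apply_ofInjective_symm e.injective _
  obtain ⟨τ, hτ⟩ := Equiv.Perm.exists_extending_pair (Subtype.val : S → α) ψ Subtype.val_injective
    (fun i j hij => Subtype.ext (hφ (by rw [← hinv i, ← hinv j, hij])))
  exact ⟨τ, fun i hi => (congrArg e (hτ ⟨i, hi⟩)).trans (hinv ⟨i, hi⟩)⟩

section

variable {m n : ℕ} {f g : (Fin m → ℤˣ) → ℝ}

theorem Isom.comp_embedding (h : Isom f g) (e : Fin m ↪ Fin n) :
    Isom (fun x => f (x ∘ e)) (fun x => g (x ∘ e)) := by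
  classical
  obtain ⟨ε, α, σ, h⟩ := h
  refine ⟨ε, extend e α 1, σ.viaFintypeEmbedding e, fun x => ?_⟩
  simp [h, comp_def, e.injective.extend_apply]

/-- Taking `x = extend φ (β * w) 1` expresses `ε * g w` through `f`, which reads `x` only on
`range e`. -/
theorem eq_of_eqOn_preimage_range {ε : ℤˣ} {β : Fin m → ℤˣ} {e φ : Fin m → Fin n}
    (hφ : Injective φ)
    (h : ∀ x : Fin n → ℤˣ, f (x ∘ e) = ((ε : ℤ) : ℝ) * g (fun i => β i * x (φ i)))
    {u v : Fin m → ℤˣ} (huv : ∀ i, φ i ∈ Set.range e → u i = v i) : g u = g v := by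
  have hg : ∀ w, ((ε : ℤ) : ℝ) * g w = f (extend φ (β * w) 1 ∘ e) := fun w => by
    simp [h, hφ.extend_apply, ← mul_assoc]
  have hε : ((ε : ℤ) : ℝ) ≠ 0 := by simp
  refine mul_left_cancel₀ hε ?_
  rw [hg, hg]
  congr 1
  funext j
  simp only [comp_apply]
  by_cases hj : ∃ i, φ i = e j
  · obtain ⟨i, hi⟩ := hj
    simp [← hi, hφ.extend_apply, huv i ⟨j, hi.symm⟩]
  · simp [extend_apply' _ _ _ hj]

theorem Isom.of_comp_embedding (e : Fin m ↪ Fin n)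
    (h : Isom (fun x => f (x ∘ e)) (fun x => g (x ∘ e))) : Isom f g := by
  classical
  obtain ⟨ε, α, σ, h⟩ := h
  obtain ⟨τ, hτ⟩ := Equiv.Perm.exists_apply_eq_of_mem_range e (σ.injective.comp e.injective)
  refine ⟨ε, α ∘ e, τ, fun x => ?_⟩
  have hx := h (extend e x 1)
  dsimp only at hx
  rw [show extend e x 1 ∘ e = x from funext (e.injective.extend_apply _ _)] at hx
  rw [hx]
  refine congrArg _ (eq_of_eqOn_preimage_range (σ.injective.comp e.injective) h fun i hi => ?_)
  rw [← e.injective.extend_apply x 1 (τ i), hτ i hi]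
  rfl

theorem isom_comp_embedding_iff (e : Fin m ↪ Fin n) :
    Isom (fun x => f (x ∘ e)) (fun x => g (x ∘ e)) ↔ Isom f g :=
  ⟨Isom.of_comp_embedding e, fun h => h.comp_embedding e⟩

end

/-- Functions on `Q_m` are isomorphic iff their extensions to `Q_n` (ignoring the
last `n - m` coordinates) are isomorphic. -/
theorem isom_iff_isom_extend (m n : ℕ) (hmn : m ≤ n)
    (f g : (Fin m → ℤˣ) → ℝ) :
    Isom f g ↔
      Isom (fun x : Fin n → ℤˣ => f (fun i => x (Fin.castLE hmn i)))
           (fun x : Fin n → ℤˣ => g (fun i => x (Fin.castLE hmn i))) :=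
  (isom_comp_embedding_iff (Fin.castLEEmb hmn)).symm
end

section
/- For all integers 0 ≤ k ≤ n, G(n,k) = G(n,n−k). -/
def chi {n : ℕ} (x : Fin n → ℤˣ) : ℤˣ := ∏ i, x i

lemma chi_flip {n : ℕ} (x : Fin n → ℤˣ) (i : Fin n) :
    chi (flipCoord x i) = - chi x := by
  unfold chi flipCoord
  rw [Finset.prod_update_of_mem (Finset.mem_univ i), neg_mul,
    ← Finset.prod_eq_mul_prod_sdiff_singleton_of_mem (Finset.mem_univ i)]

def Tfun {n : ℕ} (f : (Fin n → ℤˣ) → ℤˣ) : (Fin n → ℤˣ) → ℤˣ :=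
  fun x => f x * chi x

lemma Tfun_invol {n : ℕ} (f : (Fin n → ℤˣ) → ℤˣ) : Tfun (Tfun f) = f := by
  funext x
  simp [Tfun, mul_assoc, Int.units_mul_self]

lemma neg_ne_iff' : ∀ u v : ℤˣ, ¬(-u = v) ↔ u = v := by decide

lemma Tfun_isKFun {n m : ℕ} {f : (Fin n → ℤˣ) → ℤˣ} (hf : IsKFun m f) :
    IsKFun (n - m) (Tfun f) := by
  intro x
  have hset : {i : Fin n | Tfun f (flipCoord x i) ≠ Tfun f x}
      = {i : Fin n | f (flipCoord x i) ≠ f x}ᶜ := by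
    ext i
    simp only [Set.mem_setOf_eq, Set.mem_compl_iff, Tfun, chi_flip, mul_neg, ← neg_mul,
      not_not]
    rw [ne_eq, mul_left_inj]
    exact neg_ne_iff' _ _
  rw [hset]
  have h := Set.ncard_add_ncard_compl {i : Fin n | f (flipCoord x i) ≠ f x}
  rw [hf x, Nat.card_eq_fintype_card, Fintype.card_fin] at h
  omega

lemma isom_Tfun {n : ℕ} {f g : (Fin n → ℤˣ) → ℤˣ}
    (h : Isom (toReal f) (toReal g)) : Isom (toReal (Tfun f)) (toReal (Tfun g)) := by
  obtain ⟨ε, α, σ, h⟩ := h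
  refine ⟨ε * chi α, α, σ, fun x => ?_⟩
  have key : chi (fun i => α i * x (σ i)) = chi α * chi x := by
    unfold chi
    rw [Finset.prod_mul_distrib]
    congr 1
    exact Equiv.prod_comp σ x
  have h' := h x
  simp only [toReal] at h'
  simp only [toReal, Tfun, key, Units.val_mul, Int.cast_mul]
  have hsq : (((chi α : ℤˣ) : ℤ) : ℝ) * (((chi α : ℤˣ) : ℤ) : ℝ) = 1 := by
    rcases Int.units_eq_one_or (chi α) with hc | hc <;> simp [hc]
  rw [h']
  linear_combination (-(((ε : ℤ) : ℝ) * (((g fun i => α i * x (σ i) : ℤˣ) : ℤ) : ℝ) *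
    (((chi x : ℤˣ) : ℤ) : ℝ))) * hsq

noncomputable def kEquiv (n k : ℕ) (hkn : k ≤ n) :
    {f : (Fin n → ℤˣ) → ℤˣ // IsKFun k f} ≃ {f : (Fin n → ℤˣ) → ℤˣ // IsKFun (n - k) f} where
  toFun f := ⟨Tfun f.1, Tfun_isKFun f.2⟩
  invFun g := ⟨Tfun g.1, by
    have := Tfun_isKFun g.2
    rwa [Nat.sub_sub_self hkn] at this⟩
  left_inv f := Subtype.ext (Tfun_invol f.1)
  right_inv g := Subtype.ext (Tfun_invol g.1)

/-- Symmetry: `G(n,k) = G(n, n-k)`. -/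
theorem numIsoKFun_symm (n k : ℕ) (hkn : k ≤ n) :
    numIsoKFun n k = numIsoKFun n (n - k) := by
  unfold numIsoKFun
  refine Nat.card_congr (Quot.congr (kEquiv n k hkn) ?_)
  intro a b
  constructor
  · exact isom_Tfun
  · intro h
    have := isom_Tfun h
    simpa [kEquiv, Tfun_invol] using this
end

section
/- Let 0 ≤ k ≤ n be integers and let f and g be k-functions on Q_n. Define h : {-1,1}^{n+2} → ℝ by h(x, a, b) = ((f(x)+g(x))/2)·a + ((f(x)−g(x))/2)·b for x ∈ {-1,1}^n and a, b ∈ {-1,1} (the last two coordinates). Then h takes values in {-1,1} and is a (k+1)-function on Q_{n+2}. -/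
namespace CAux

def res {n : ℕ} (x : Fin (n+2) → ℤˣ) : Fin n → ℤˣ :=
  fun i => x (Fin.castLE (Nat.le_add_right n 2) i)

def F {n : ℕ} (f g : (Fin n → ℤˣ) → ℤˣ) (x : Fin (n+2) → ℤˣ) : ℤˣ :=
  if f (res x) = g (res x) then f (res x) * x ⟨n, by omega⟩
  else f (res x) * x ⟨n + 1, by omega⟩

lemma res_flip_cast {n : ℕ} (x : Fin (n+2) → ℤˣ) (i : Fin n) :
    res (flipCoord x (Fin.castLE (Nat.le_add_right n 2) i)) = flipCoord (res x) i := by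
  funext j
  simp only [res, flipCoord, Function.update_apply]
  by_cases h : j = i
  · subst h; simp
  · rw [if_neg (fun hc => h (Fin.castLE_injective _ hc)), if_neg h]

lemma flip_cast_last {n : ℕ} (x : Fin (n+2) → ℤˣ) (i : Fin n) (m : ℕ) (hm : n ≤ m)
    (hm2 : m < n + 2) :
    flipCoord x (Fin.castLE (Nat.le_add_right n 2) i) ⟨m, hm2⟩ = x ⟨m, hm2⟩ := by
  apply Function.update_of_ne
  intro hc
  have : m = (i : ℕ) := congrArg Fin.val hc
  omega

lemma res_flip_last {n : ℕ} (x : Fin (n+2) → ℤˣ) (m : ℕ) (hm : n ≤ m) (hm2 : m < n + 2) :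
    res (flipCoord x ⟨m, hm2⟩) = res x := by
  funext j
  apply Function.update_of_ne
  intro hc
  have : (j : ℕ) = m := congrArg Fin.val hc
  have := j.isLt
  omega

lemma flip_last_last {n : ℕ} (x : Fin (n+2) → ℤˣ) (m m' : ℕ) (hm2 : m < n + 2)
    (hm2' : m' < n + 2) (hne : m' ≠ m) :
    flipCoord x ⟨m, hm2⟩ ⟨m', hm2'⟩ = x ⟨m', hm2'⟩ := by
  apply Function.update_of_ne
  intro hc
  exact hne (congrArg Fin.val hc)

lemma flip_same {n : ℕ} (x : Fin n → ℤˣ) (i : Fin n) : flipCoord x i i = -(x i) := by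
  simp [flipCoord]

-- key sign lemmas
lemma units_if_eq (u v a b : ℤˣ) (hab : a = b) :
    (if u = v then u * a else u * b) = u * a := by
  rcases Int.units_eq_one_or u with rfl|rfl <;> rcases Int.units_eq_one_or v with rfl|rfl <;>
    subst hab <;> simp

lemma units_if_ne (u v a b : ℤˣ) (hab : a ≠ b) :
    (if u = v then u * a else u * b) = v * a := by
  rcases Int.units_eq_one_or u with rfl|rfl <;> rcases Int.units_eq_one_or v with rfl|rfl <;>
    rcases Int.units_eq_one_or a with rfl|rfl <;> rcases Int.units_eq_one_or b with rfl|rfl <;>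
    revert hab <;> decide

lemma units_neg_ne (u a : ℤˣ) : u * (-a) ≠ u * a := by
  rcases Int.units_eq_one_or u with rfl|rfl <;> rcases Int.units_eq_one_or a with rfl|rfl <;> decide

lemma core {n k : ℕ} {f g : (Fin n → ℤˣ) → ℤˣ} (hf : IsKFun k f) (hg : IsKFun k g) :
    IsKFun (k+1) (F f g) := by
  intro x
  have hn : n < n + 2 := by omega
  have hn1 : n + 1 < n + 2 := by omega
  set y := res x with hy
  set a := x ⟨n, hn⟩ with ha
  set b := x ⟨n + 1, hn1⟩ with hb
  -- value of F at a neighbour via a low coordinate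
  have hFc : ∀ i : Fin n, F f g (flipCoord x (Fin.castLE (Nat.le_add_right n 2) i)) =
      (if f (flipCoord y i) = g (flipCoord y i) then f (flipCoord y i) * a
        else f (flipCoord y i) * b) := by
    intro i
    simp only [F, res_flip_cast, flip_cast_last x i n le_rfl hn,
      flip_cast_last x i (n+1) (by omega) hn1, ← ha, ← hb, ← hy]
  have hFn : F f g (flipCoord x ⟨n, hn⟩) =
      (if f y = g y then f y * (-a) else f y * b) := by
    simp only [F, res_flip_last x n le_rfl hn, flip_same, flip_last_last x n (n+1) hn hn1 (by omega),
      ← ha, ← hb, ← hy]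
  have hFn1 : F f g (flipCoord x ⟨n + 1, hn1⟩) =
      (if f y = g y then f y * a else f y * (-b)) := by
    simp only [F, res_flip_last x (n+1) (by omega) hn1, flip_same,
      flip_last_last x (n+1) n hn1 hn (by omega), ← ha, ← hb, ← hy]
  have hFx : F f g x = (if f y = g y then f y * a else f y * b) := rfl
  -- the distinguished last coordinate
  set j0 : Fin (n+2) := if f y = g y then ⟨n, hn⟩ else ⟨n + 1, hn1⟩ with hj0
  by_cases hab : a = b
  · -- h flips on low coordinates exactly where f does
    have hset : {i : Fin (n+2) | F f g (flipCoord x i) ≠ F f g x} =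
        insert j0 ((Fin.castLE (Nat.le_add_right n 2)) ''
          {i : Fin n | f (flipCoord y i) ≠ f y}) := by
      ext j
      simp only [Set.mem_setOf_eq, Set.mem_insert_iff, Set.mem_image]
      by_cases hj : (j : ℕ) < n
      · have hjc : j = Fin.castLE (Nat.le_add_right n 2) ⟨(j : ℕ), hj⟩ := rfl
        rw [hjc, hFc ⟨(j : ℕ), hj⟩, hFx, units_if_eq _ _ _ _ hab,
          units_if_eq _ _ _ _ hab]
        constructor
        · intro hne
          right
          exact ⟨⟨(j : ℕ), hj⟩, fun hc => hne (by rw [hc]), rfl⟩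
        · rintro (hc | ⟨i, hi, hic⟩)
          · exfalso
            have := congrArg Fin.val hc
            simp only [hj0] at this
            split_ifs at this <;> simp at this <;> omega
          · have : i = ⟨(j : ℕ), hj⟩ := Fin.castLE_injective _ hic
            subst this
            exact fun hc => hi (mul_right_cancel hc)
      · have hval : (j : ℕ) = n ∨ (j : ℕ) = n + 1 := by have := j.isLt; omega
        have hnoimg : ¬ ∃ i : Fin n, f (flipCoord y i) ≠ f y ∧
            Fin.castLE (Nat.le_add_right n 2) i = j := by
          rintro ⟨i, -, hic⟩
          have : (i : ℕ) = (j : ℕ) := congrArg Fin.val hic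
          have := i.isLt
          omega
        rcases hval with hval | hval
        · have hjn : j = ⟨n, hn⟩ := Fin.ext hval
          subst hjn
          rw [hFn, hFx]
          by_cases hc : f y = g y
          · simp only [if_pos hc]
            constructor
            · intro; left; simp [hj0, if_pos hc]
            · intro; exact units_neg_ne _ _
          · simp only [if_neg hc]
            constructor
            · intro hne; exact absurd rfl hne
            · rintro (hcj | him)
              · exfalso
                simp only [hj0, if_neg hc] at hcj
                have := congrArg Fin.val hcj
                simp at this
              · exact absurd him hnoimg
        · have hjn : j = ⟨n + 1, hn1⟩ := Fin.ext hval
          subst hjn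
          rw [hFn1, hFx]
          by_cases hc : f y = g y
          · simp only [if_pos hc]
            constructor
            · intro hne; exact absurd rfl hne
            · rintro (hcj | him)
              · exfalso
                simp only [hj0, if_pos hc] at hcj
                have := congrArg Fin.val hcj
                simp at this
              · exact absurd him hnoimg
          · simp only [if_neg hc]
            constructor
            · intro; left; simp [hj0, if_neg hc]
            · intro
              have : f y * (-b) = -(f y * b) := mul_neg _ _
              rw [this]
              exact fun hcc => units_neg_ne (f y) b (by rw [← neg_neg b] at hcc; simpa using hcc)
      -- end ext
    rw [hset]
    have hnotmem : j0 ∉ (Fin.castLE (Nat.le_add_right n 2)) ''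
        {i : Fin n | f (flipCoord y i) ≠ f y} := by
      rintro ⟨i, -, hic⟩
      have h1 : (i : ℕ) = (j0 : ℕ) := congrArg Fin.val hic
      have := i.isLt
      simp only [hj0] at h1
      split_ifs at h1 <;> simp at h1 <;> omega
    rw [Set.ncard_insert_of_notMem hnotmem,
      Set.ncard_image_of_injective _ (Fin.castLE_injective _), hf y]
  · -- a ≠ b : h flips on low coordinates exactly where g does
    have hset : {i : Fin (n+2) | F f g (flipCoord x i) ≠ F f g x} =
        insert j0 ((Fin.castLE (Nat.le_add_right n 2)) ''
          {i : Fin n | g (flipCoord y i) ≠ g y}) := by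
      ext j
      simp only [Set.mem_setOf_eq, Set.mem_insert_iff, Set.mem_image]
      by_cases hj : (j : ℕ) < n
      · have hjc : j = Fin.castLE (Nat.le_add_right n 2) ⟨(j : ℕ), hj⟩ := rfl
        rw [hjc, hFc ⟨(j : ℕ), hj⟩, hFx, units_if_ne _ _ _ _ hab, units_if_ne _ _ _ _ hab]
        constructor
        · intro hne
          right
          exact ⟨⟨(j : ℕ), hj⟩, fun hc => hne (by rw [hc]), rfl⟩
        · rintro (hc | ⟨i, hi, hic⟩)
          · exfalso
            have := congrArg Fin.val hc
            simp only [hj0] at this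
            split_ifs at this <;> simp at this <;> omega
          · have : i = ⟨(j : ℕ), hj⟩ := Fin.castLE_injective _ hic
            subst this
            exact fun hc => hi (mul_right_cancel hc)
      · have hval : (j : ℕ) = n ∨ (j : ℕ) = n + 1 := by have := j.isLt; omega
        have hnoimg : ¬ ∃ i : Fin n, g (flipCoord y i) ≠ g y ∧
            Fin.castLE (Nat.le_add_right n 2) i = j := by
          rintro ⟨i, -, hic⟩
          have : (i : ℕ) = (j : ℕ) := congrArg Fin.val hic
          have := i.isLt
          omega
        rcases hval with hval | hval
        · have hjn : j = ⟨n, hn⟩ := Fin.ext hval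
          subst hjn
          rw [hFn, hFx]
          by_cases hc : f y = g y
          · simp only [if_pos hc]
            constructor
            · intro; left; simp [hj0, if_pos hc]
            · intro; exact units_neg_ne _ _
          · simp only [if_neg hc]
            constructor
            · intro hne; exact absurd rfl hne
            · rintro (hcj | him)
              · exfalso
                simp only [hj0, if_neg hc] at hcj
                have := congrArg Fin.val hcj
                simp at this
              · exact absurd him hnoimg
        · have hjn : j = ⟨n + 1, hn1⟩ := Fin.ext hval
          subst hjn
          rw [hFn1, hFx]
          by_cases hc : f y = g y
          · simp only [if_pos hc]
            constructor
            · intro hne; exact absurd rfl hne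
            · rintro (hcj | him)
              · exfalso
                simp only [hj0, if_pos hc] at hcj
                have := congrArg Fin.val hcj
                simp at this
              · exact absurd him hnoimg
          · simp only [if_neg hc]
            constructor
            · intro; left; simp [hj0, if_neg hc]
            · intro
              have heq : f y * (-b) = -(f y * b) := mul_neg _ _
              rw [heq]
              exact fun hcc => units_neg_ne (f y) b (by rw [← neg_neg b] at hcc; simpa using hcc)
    rw [hset]
    have hnotmem : j0 ∉ (Fin.castLE (Nat.le_add_right n 2)) ''
        {i : Fin n | g (flipCoord y i) ≠ g y} := by
      rintro ⟨i, -, hic⟩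
      have h1 : (i : ℕ) = (j0 : ℕ) := congrArg Fin.val hic
      have := i.isLt
      simp only [hj0] at h1
      split_ifs at h1 <;> simp at h1 <;> omega
    rw [Set.ncard_insert_of_notMem hnotmem,
      Set.ncard_image_of_injective _ (Fin.castLE_injective _), hg y]

end CAux

namespace CAux

lemma val_lemma (u v a b : ℤˣ) :
    ((((u:ℤ):ℝ) + ((v:ℤ):ℝ))/2) * ((a:ℤ):ℝ) + ((((u:ℤ):ℝ) - ((v:ℤ):ℝ))/2) * ((b:ℤ):ℝ)
      = (((if u = v then u * a else u * b : ℤˣ) : ℤ) : ℝ) := by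
  rcases Int.units_eq_one_or u with rfl|rfl <;> rcases Int.units_eq_one_or v with rfl|rfl <;>
    simp <;> push_cast <;> ring

end CAux

/-- From two `k`-functions `f, g` on `Q_n`, the function
`h(x,a,b) = ((f+g)/2)(x)·a + ((f-g)/2)(x)·b` is `{-1,1}`-valued and is a
`(k+1)`-function on `Q_{n+2}`. -/
theorem construction (n k : ℕ) (hkn : k ≤ n) (f g : (Fin n → ℤˣ) → ℤˣ)
    (hf : IsKFun k f) (hg : IsKFun k g)
    (h : (Fin (n + 2) → ℤˣ) → ℝ)
    (hh : ∀ x : Fin (n + 2) → ℤˣ,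
      h x = ((toReal f (fun i => x (Fin.castLE (Nat.le_add_right n 2) i))
              + toReal g (fun i => x (Fin.castLE (Nat.le_add_right n 2) i))) / 2)
              * ((x ⟨n, by omega⟩ : ℤ) : ℝ)
          + ((toReal f (fun i => x (Fin.castLE (Nat.le_add_right n 2) i))
              - toReal g (fun i => x (Fin.castLE (Nat.le_add_right n 2) i))) / 2)
              * ((x ⟨n + 1, by omega⟩ : ℤ) : ℝ)) :
    (∀ x, h x = 1 ∨ h x = -1) ∧ IsKFun (k + 1) h := by
  have hFval : ∀ x, h x = (((CAux.F f g x : ℤˣ) : ℤ) : ℝ) := by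
    intro x
    rw [hh x]
    exact CAux.val_lemma _ _ _ _
  constructor
  · intro x
    rw [hFval x]
    rcases Int.units_eq_one_or (CAux.F f g x) with hc | hc <;> rw [hc] <;> norm_num
  · intro x
    have hset : {i : Fin (n+2) | h (flipCoord x i) ≠ h x} =
        {i : Fin (n+2) | CAux.F f g (flipCoord x i) ≠ CAux.F f g x} := by
      ext i
      simp only [Set.mem_setOf_eq, hFval, ne_eq, Int.cast_inj]
      exact not_congr (by exact_mod_cast Iff.rfl)
    rw [hset]
    exact CAux.core hf hg x
end

section
/- For all integers 0 ≤ k ≤ n, F(n+2, k+1) ≥ F(n,k)². -/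
namespace KFunSq

variable {n k : ℕ}

lemma units_int_cases (u : ℤˣ) : u = 1 ∨ u = -1 := Int.units_eq_one_or u

lemma neg_eq_iff_ne (u v : ℤˣ) : (-u = v) ↔ ¬(u = v) := by
  rcases units_int_cases u with h | h <;> rcases units_int_cases v with h' | h' <;>
    subst h <;> subst h' <;> decide

lemma eq_neg_iff_ne (u v : ℤˣ) : (u = -v) ↔ ¬(u = v) := by
  rcases units_int_cases u with h | h <;> rcases units_int_cases v with h' | h' <;>
    subst h <;> subst h' <;> decide

def emb (i : Fin n) : Fin (n + 2) := ⟨i.1, by omega⟩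

lemma emb_injective : Function.Injective (emb (n := n)) := by
  intro i j h
  simp only [emb, Fin.mk.injEq] at h
  exact Fin.ext h

def lastA (n : ℕ) : Fin (n + 2) := ⟨n, by omega⟩
def lastB (n : ℕ) : Fin (n + 2) := ⟨n + 1, by omega⟩

lemma emb_ne_lastA (i : Fin n) : emb i ≠ lastA n := by
  intro h
  have h' := congrArg Fin.val h
  simp only [emb, lastA] at h'
  have := i.2
  omega

lemma emb_ne_lastB (i : Fin n) : emb i ≠ lastB n := by
  intro h
  have h' := congrArg Fin.val h
  simp only [emb, lastB] at h'
  have := i.2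
  omega

lemma lastA_ne_lastB : lastA n ≠ lastB n := by
  simp [lastA, lastB, Fin.ext_iff]

/-- Restriction of a vertex of `Q_{n+2}` to its first `n` coordinates. -/
def res (x : Fin (n + 2) → ℤˣ) (i : Fin n) : ℤˣ := x (emb i)

/-- Combine two functions on `Q_n` into one on `Q_{n+2}`. -/
def combine (f g : (Fin n → ℤˣ) → ℤˣ) (x : Fin (n + 2) → ℤˣ) : ℤˣ :=
  if x (lastA n) = x (lastB n) then x (lastA n) * f (res x) else x (lastA n) * g (res x)

lemma res_flip_emb (x : Fin (n + 2) → ℤˣ) (i : Fin n) :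
    res (flipCoord x (emb i)) = flipCoord (res x) i := by
  funext j
  by_cases h : j = i
  · subst h
    simp [res, flipCoord]
  · simp [res, flipCoord, Function.update_of_ne (fun hh => h (emb_injective hh)),
      Function.update_of_ne h]

lemma res_flip_lastA (x : Fin (n + 2) → ℤˣ) : res (flipCoord x (lastA n)) = res x := by
  funext j
  simp [res, flipCoord, Function.update_of_ne (emb_ne_lastA j)]

lemma res_flip_lastB (x : Fin (n + 2) → ℤˣ) : res (flipCoord x (lastB n)) = res x := by
  funext j
  simp [res, flipCoord, Function.update_of_ne (emb_ne_lastB j)]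

lemma flip_emb_lastA (x : Fin (n + 2) → ℤˣ) (i : Fin n) :
    flipCoord x (emb i) (lastA n) = x (lastA n) :=
  Function.update_of_ne (emb_ne_lastA i).symm _ _

lemma flip_emb_lastB (x : Fin (n + 2) → ℤˣ) (i : Fin n) :
    flipCoord x (emb i) (lastB n) = x (lastB n) :=
  Function.update_of_ne (emb_ne_lastB i).symm _ _

lemma flip_lastA_lastA (x : Fin (n + 2) → ℤˣ) :
    flipCoord x (lastA n) (lastA n) = -(x (lastA n)) :=
  Function.update_self _ _ _

lemma flip_lastA_lastB (x : Fin (n + 2) → ℤˣ) :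
    flipCoord x (lastA n) (lastB n) = x (lastB n) :=
  Function.update_of_ne lastA_ne_lastB.symm _ _

lemma flip_lastB_lastA (x : Fin (n + 2) → ℤˣ) :
    flipCoord x (lastB n) (lastA n) = x (lastA n) :=
  Function.update_of_ne lastA_ne_lastB _ _

lemma flip_lastB_lastB (x : Fin (n + 2) → ℤˣ) :
    flipCoord x (lastB n) (lastB n) = -(x (lastB n)) :=
  Function.update_self _ _ _

lemma combine_flip_emb (f g : (Fin n → ℤˣ) → ℤˣ) (x : Fin (n + 2) → ℤˣ) (i : Fin n) :
    combine f g (flipCoord x (emb i)) =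
      if x (lastA n) = x (lastB n) then x (lastA n) * f (flipCoord (res x) i)
      else x (lastA n) * g (flipCoord (res x) i) := by
  unfold combine
  rw [flip_emb_lastA, flip_emb_lastB, res_flip_emb]

lemma combine_flip_lastA (f g : (Fin n → ℤˣ) → ℤˣ) (x : Fin (n + 2) → ℤˣ) :
    combine f g (flipCoord x (lastA n)) =
      if -(x (lastA n)) = x (lastB n) then -(x (lastA n)) * f (res x)
      else -(x (lastA n)) * g (res x) := by
  unfold combine
  rw [flip_lastA_lastA, flip_lastA_lastB, res_flip_lastA]

lemma combine_flip_lastB (f g : (Fin n → ℤˣ) → ℤˣ) (x : Fin (n + 2) → ℤˣ) :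
    combine f g (flipCoord x (lastB n)) =
      if x (lastA n) = -(x (lastB n)) then x (lastA n) * f (res x)
      else x (lastA n) * g (res x) := by
  unfold combine
  rw [flip_lastB_lastA, flip_lastB_lastB, res_flip_lastB]

lemma c1_eq_neg_c2 (f g : (Fin n → ℤˣ) → ℤˣ) (x : Fin (n + 2) → ℤˣ) :
    combine f g (flipCoord x (lastA n)) = -(combine f g (flipCoord x (lastB n))) := by
  rw [combine_flip_lastA, combine_flip_lastB]
  by_cases h : x (lastA n) = x (lastB n)
  · rw [if_neg (by rw [neg_eq_iff_ne]; simp [h]), if_neg (by rw [eq_neg_iff_ne]; simp [h]),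
      neg_mul]
  · rw [if_pos (by rw [neg_eq_iff_ne]; exact h), if_pos (by rw [eq_neg_iff_ne]; exact h),
      neg_mul]

lemma xor_of_neg (u c : ℤˣ) : (-u ≠ c ∧ ¬(u ≠ c)) ∨ (¬(-u ≠ c) ∧ u ≠ c) := by
  rcases units_int_cases u with h | h <;> rcases units_int_cases c with h' | h' <;>
    subst h <;> subst h' <;> decide

lemma ncard_aux (S : Set (Fin (n + 2))) (S₀ : Set (Fin n))
    (hmem : ∀ i : Fin n, emb i ∈ S ↔ i ∈ S₀)
    (hxor : (lastA n ∈ S ∧ lastB n ∉ S) ∨ (lastA n ∉ S ∧ lastB n ∈ S))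
    (h₀ : S₀.ncard = k) : S.ncard = k + 1 := by
  have key : ∀ j : Fin (n + 2), j ∈ ({lastA n, lastB n} : Set (Fin (n+2))) → j ∈ S →
      (∀ j', j' ∈ ({lastA n, lastB n} : Set (Fin (n+2))) → (j' ∈ S ↔ j' = j)) →
      S.ncard = k + 1 := by
    intro j hj hjS hiff
    have hS : S = insert j (emb '' S₀) := by
      ext i
      constructor
      · intro hi
        by_cases hv : (i : ℕ) < n
        · have e : emb ⟨i.1, hv⟩ = i := Fin.ext rfl
          exact Set.mem_insert_of_mem _ ⟨⟨i.1, hv⟩, (hmem _).1 (by rwa [e]), e⟩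
        · have hi' : i = lastA n ∨ i = lastB n := by
            have h2 := i.2
            rcases Nat.lt_or_ge (i : ℕ) (n + 1) with h | h
            · exact Or.inl (Fin.ext (by simp [lastA]; omega))
            · exact Or.inr (Fin.ext (by simp [lastB]; omega))
          have : i = j := by
            rcases hi' with rfl | rfl
            · exact (hiff _ (Set.mem_insert _ _)).1 hi
            · exact (hiff _ (Set.mem_insert_of_mem _ rfl)).1 hi
          exact this ▸ Set.mem_insert _ _
      · intro hi
        rcases Set.mem_insert_iff.1 hi with rfl | ⟨i₀, hi₀, rfl⟩
        · exact hjS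
        · exact (hmem i₀).2 hi₀
    have hjn : j ∉ emb '' S₀ := by
      rintro ⟨i₀, _, he⟩
      rcases Set.mem_insert_iff.1 hj with rfl | hj'
      · exact emb_ne_lastA i₀ he
      · exact emb_ne_lastB i₀ (he.trans (Set.mem_singleton_iff.1 hj'))
    rw [hS, Set.ncard_insert_of_notMem hjn (Set.toFinite _),
      Set.ncard_image_of_injective _ emb_injective, h₀]
  rcases hxor with ⟨hA, hB⟩ | ⟨hA, hB⟩
  · refine key (lastA n) (Set.mem_insert _ _) hA ?_
    rintro j' hj'
    rcases Set.mem_insert_iff.1 hj' with rfl | hj'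
    · simp [hA]
    · rw [Set.mem_singleton_iff.1 hj']
      simp [hB, lastA_ne_lastB.symm]
  · refine key (lastB n) (Set.mem_insert_of_mem _ rfl) hB ?_
    rintro j' hj'
    rcases Set.mem_insert_iff.1 hj' with rfl | hj'
    · simp [hA, lastA_ne_lastB]
    · rw [Set.mem_singleton_iff.1 hj']
      simp [hB]

lemma isKFun_combine {f g : (Fin n → ℤˣ) → ℤˣ} (hf : IsKFun k f) (hg : IsKFun k g) :
    IsKFun (k + 1) (combine f g) := by
  intro x
  have hxor0 := xor_of_neg (combine f g (flipCoord x (lastB n))) (combine f g x)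
  rw [← c1_eq_neg_c2 f g x] at hxor0
  by_cases hab : x (lastA n) = x (lastB n)
  · refine ncard_aux _ {i : Fin n | f (flipCoord (res x) i) ≠ f (res x)} ?_ hxor0 (hf (res x))
    intro i
    have hc : combine f g x = x (lastA n) * f (res x) := by rw [combine, if_pos hab]
    simp only [Set.mem_setOf_eq, combine_flip_emb, if_pos hab, hc, ne_eq, mul_right_inj]
  · refine ncard_aux _ {i : Fin n | g (flipCoord (res x) i) ≠ g (res x)} ?_ hxor0 (hg (res x))
    intro i
    have hc : combine f g x = x (lastA n) * g (res x) := by rw [combine, if_neg hab]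
    simp only [Set.mem_setOf_eq, combine_flip_emb, if_neg hab, hc, ne_eq, mul_right_inj]

/-- Extend a vertex of `Q_n` by two extra coordinates. -/
def ext2 (y : Fin n → ℤˣ) (a b : ℤˣ) : Fin (n + 2) → ℤˣ := fun j =>
  if h : (j : ℕ) < n then y ⟨j, h⟩ else if (j : ℕ) = n then a else b

lemma ext2_lastA (y : Fin n → ℤˣ) (a b : ℤˣ) : ext2 y a b (lastA n) = a := by
  simp [ext2, lastA]

lemma ext2_lastB (y : Fin n → ℤˣ) (a b : ℤˣ) : ext2 y a b (lastB n) = b := by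
  simp [ext2, lastB]

lemma res_ext2 (y : Fin n → ℤˣ) (a b : ℤˣ) : res (ext2 y a b) = y := by
  funext i
  simp [res, ext2, emb, i.2]

lemma combine_ext2_ff (f g : (Fin n → ℤˣ) → ℤˣ) (y : Fin n → ℤˣ) :
    combine f g (ext2 y 1 1) = f y := by
  rw [combine, ext2_lastA, ext2_lastB, res_ext2, if_pos rfl, one_mul]

lemma combine_ext2_gg (f g : (Fin n → ℤˣ) → ℤˣ) (y : Fin n → ℤˣ) :
    combine f g (ext2 y 1 (-1)) = g y := by
  rw [combine, ext2_lastA, ext2_lastB, res_ext2, if_neg (by decide), one_mul]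

def pairMap (p : {f : (Fin n → ℤˣ) → ℤˣ // IsKFun k f} × {f : (Fin n → ℤˣ) → ℤˣ // IsKFun k f}) :
    {h : (Fin (n + 2) → ℤˣ) → ℤˣ // IsKFun (k + 1) h} :=
  ⟨combine p.1.1 p.2.1, isKFun_combine p.1.2 p.2.2⟩

lemma pairMap_injective : Function.Injective (pairMap (n := n) (k := k)) := by
  rintro ⟨⟨f, hf⟩, ⟨g, hg⟩⟩ ⟨⟨f', hf'⟩, ⟨g', hg'⟩⟩ h
  have h' : combine f g = combine f' g' := congrArg Subtype.val h
  have hfe : f = f' := by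
    funext y
    have := congrFun h' (ext2 y 1 1)
    rwa [combine_ext2_ff, combine_ext2_ff] at this
  have hge : g = g' := by
    funext y
    have := congrFun h' (ext2 y 1 (-1))
    rwa [combine_ext2_gg, combine_ext2_gg] at this
  subst hfe; subst hge; rfl

end KFunSq

/-- `F(n+2, k+1) ≥ F(n,k)²`. -/
theorem numKFun_squaring (n k : ℕ) (hkn : k ≤ n) :
    numKFun n k ^ 2 ≤ numKFun (n + 2) (k + 1) := by
  have h1 : numKFun n k ^ 2 =
      Nat.card ({f : (Fin n → ℤˣ) → ℤˣ // IsKFun k f} ×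
        {f : (Fin n → ℤˣ) → ℤˣ // IsKFun k f}) := by
    rw [Nat.card_prod, numKFun, sq]
  rw [h1, numKFun]
  exact Nat.card_le_card_of_injective _ KFunSq.pairMap_injective
end

section
/- For every integer k ≥ 0, F(2k, k) ≥ 2^{2^k}. -/
section Aux

variable {k : ℕ}

/-- Equivalence between `Fin k ⊕ Fin k` and `Fin (2*k)`. -/
def myE (k : ℕ) : Fin k ⊕ Fin k ≃ Fin (2 * k) :=
  finSumFinEquiv.trans (finCongr (two_mul k).symm)

/-- The "product of pairs" map. -/
def myU (z : Fin (2 * k) → ℤˣ) : Fin k → ℤˣ :=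
  fun i => z (myE k (Sum.inl i)) * z (myE k (Sum.inr i))

/-- The construction: from `g` on `Q_k` produce a function on `Q_{2k}`. -/
def myF (g : (Fin k → ℤˣ) → ℤˣ) (z : Fin (2 * k) → ℤˣ) : ℤˣ :=
  g (myU z) * ∏ i : Fin k, z (myE k (Sum.inr i))

lemma u_flip_left (z : Fin (2 * k) → ℤˣ) (i : Fin k) :
    myU (flipCoord z (myE k (Sum.inl i))) = flipCoord (myU z) i := by
  funext j
  simp only [myU, flipCoord, Function.update]
  rcases eq_or_ne j i with rfl | h
  · simp [(myE k).injective.eq_iff]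
  · simp [(myE k).injective.eq_iff, h, (Ne.symm h)]

lemma u_flip_right (z : Fin (2 * k) → ℤˣ) (i : Fin k) :
    myU (flipCoord z (myE k (Sum.inr i))) = flipCoord (myU z) i := by
  funext j
  simp only [myU, flipCoord, Function.update]
  rcases eq_or_ne j i with rfl | h
  · simp [(myE k).injective.eq_iff]
  · simp [(myE k).injective.eq_iff, h, (Ne.symm h)]

lemma prod_flip_left (z : Fin (2 * k) → ℤˣ) (i : Fin k) :
    ∏ j : Fin k, (flipCoord z (myE k (Sum.inl i))) (myE k (Sum.inr j))
      = ∏ j : Fin k, z (myE k (Sum.inr j)) := by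
  apply Finset.prod_congr rfl
  intro j _
  simp [flipCoord, Function.update, (myE k).injective.eq_iff]

lemma prod_flip_right (z : Fin (2 * k) → ℤˣ) (i : Fin k) :
    ∏ j : Fin k, (flipCoord z (myE k (Sum.inr i))) (myE k (Sum.inr j))
      = -∏ j : Fin k, z (myE k (Sum.inr j)) := by
  have h : (fun j => (flipCoord z (myE k (Sum.inr i))) (myE k (Sum.inr j)))
      = Function.update (fun j => z (myE k (Sum.inr j))) i (-(z (myE k (Sum.inr i)))) := by
    funext j
    simp only [flipCoord, Function.update]
    rcases eq_or_ne j i with rfl | h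
    · simp
    · simp [(myE k).injective.eq_iff, h]
  rw [h, Finset.prod_update_of_mem (Finset.mem_univ i)]
  rw [← Finset.mul_prod_erase Finset.univ _ (Finset.mem_univ i),
    Finset.sdiff_singleton_eq_erase, neg_mul]

lemma units_key : ∀ a b P : ℤˣ, (a * -P ≠ b * P ↔ a = b) := by decide

lemma units_key2 : ∀ a b P : ℤˣ, (a * P ≠ b * P ↔ a ≠ b) := by decide

lemma myF_isKFun (g : (Fin k → ℤˣ) → ℤˣ) : IsKFun k (myF g) := by
  intro z
  rw [← Nat.card_coe_set_eq]
  have e1 : {i : Fin (2*k) | myF g (flipCoord z i) ≠ myF g z}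
      ≃ {s : Fin k ⊕ Fin k | myF g (flipCoord z (myE k s)) ≠ myF g z} :=
    ((myE k).subtypeEquiv (by intro s; rfl)).symm
  rw [Nat.card_congr (e1.trans Equiv.subtypeSum)]
  rw [Nat.card_sum]
  have hl : ∀ i : Fin k,
      (myF g (flipCoord z (myE k (Sum.inl i))) ≠ myF g z) ↔
        g (flipCoord (myU z) i) ≠ g (myU z) := by
    intro i
    rw [myF, myF, u_flip_left, prod_flip_left, units_key2]
  have hr : ∀ i : Fin k,
      (myF g (flipCoord z (myE k (Sum.inr i))) ≠ myF g z) ↔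
        ¬ (g (flipCoord (myU z) i) ≠ g (myU z)) := by
    intro i
    rw [myF, myF, u_flip_right, prod_flip_right, units_key, not_ne_iff]
  have c1 : Nat.card {i : Fin k | myF g (flipCoord z (myE k (Sum.inl i))) ≠ myF g z}
      = Nat.card {i : Fin k | g (flipCoord (myU z) i) ≠ g (myU z)} :=
    Nat.card_congr (Equiv.subtypeEquivRight hl)
  have c2 : Nat.card {i : Fin k | myF g (flipCoord z (myE k (Sum.inr i))) ≠ myF g z}
      = Nat.card ↥(({i : Fin k | g (flipCoord (myU z) i) ≠ g (myU z)} : Set (Fin k))ᶜ) :=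
    Nat.card_congr (Equiv.subtypeEquivRight hr)
  show Nat.card {i : Fin k | myF g (flipCoord z (myE k (Sum.inl i))) ≠ myF g z}
      + Nat.card {i : Fin k | myF g (flipCoord z (myE k (Sum.inr i))) ≠ myF g z} = k
  rw [c1, c2, Nat.card_coe_set_eq, Nat.card_coe_set_eq,
    Set.ncard_add_ncard_compl]
  simp [Nat.card_eq_fintype_card]

/-- The section: embed `Q_k` into `Q_{2k}`. -/
def mySec (v : Fin k → ℤˣ) : Fin (2 * k) → ℤˣ :=
  fun j => Sum.elim v (fun _ => 1) ((myE k).symm j)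

lemma myF_sec (g : (Fin k → ℤˣ) → ℤˣ) (v : Fin k → ℤˣ) : myF g (mySec v) = g v := by
  have hu : myU (mySec v) = v := by
    funext i
    simp [myU, mySec, Equiv.symm_apply_apply]
  have hp : ∏ i : Fin k, mySec v (myE k (Sum.inr i)) = 1 := by
    apply Finset.prod_eq_one
    intro i _
    simp [mySec, Equiv.symm_apply_apply]
  rw [myF, hu, hp, mul_one]

lemma myF_injective : Function.Injective (myF (k := k)) := by
  intro g h hgh
  funext v
  have := congrFun hgh (mySec v)
  rwa [myF_sec, myF_sec] at this

end Aux

/-- `F(2k, k) ≥ 2^(2^k)`. -/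
theorem numKFun_lower_bound (k : ℕ) : 2 ^ 2 ^ k ≤ numKFun (2 * k) k := by
  have hinj : Function.Injective
      (fun g : (Fin k → ℤˣ) → ℤˣ => (⟨myF g, myF_isKFun g⟩ :
        {f : (Fin (2*k) → ℤˣ) → ℤˣ // IsKFun k f})) := by
    intro g h hgh
    exact myF_injective (congrArg Subtype.val hgh)
  have hle := Nat.card_le_card_of_injective _ hinj
  have hcard : Nat.card ((Fin k → ℤˣ) → ℤˣ) = 2 ^ 2 ^ k := by
    rw [Nat.card_eq_fintype_card, Fintype.card_fun]
    simp [Fintype.card_fin]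
  rw [numKFun]
  omega
end

section
/- Let 1 ≤ k ≤ n be integers. Then F(n,k) ≤ S(4^{k-1}, C(n,k)), where C(n,k) is the binomial coefficient. -/
/-- `S q t`: the number of vectors `x ∈ ℤ^t` with `∑ x_i² = q`. -/
noncomputable def numSqRep (q t : ℕ) : ℕ :=
  Nat.card {x : Fin t → ℤ // ∑ i, (x i) ^ 2 = (q : ℤ)}


namespace KAux
variable {n : ℕ}

/-- character -/
def chi (S : Finset (Fin n)) (x : Fin n → ℤˣ) : ℤ := ∏ i ∈ S, (x i : ℤ)

/-- unnormalized Fourier coefficient -/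
def coef (f : (Fin n → ℤˣ) → ℤˣ) (S : Finset (Fin n)) : ℤ :=
  ∑ x : Fin n → ℤˣ, (f x : ℤ) * chi S x

lemma chi_unit (S : Finset (Fin n)) (x : Fin n → ℤˣ) :
    chi S x = 1 ∨ chi S x = -1 := by
  have : chi S x = ((∏ i ∈ S, x i : ℤˣ) : ℤ) := by
    simp [chi]
  rcases Int.units_eq_one_or (∏ i ∈ S, x i) with h | h <;> rw [this, h] <;> simp

lemma chi_mul_self (S : Finset (Fin n)) (x : Fin n → ℤˣ) : chi S x * chi S x = 1 := by
  rcases chi_unit S x with h | h <;> rw [h] <;> norm_num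

lemma chi_empty (x : Fin n → ℤˣ) : chi (∅ : Finset (Fin n)) x = 1 := by simp [chi]

lemma chi_flip (S : Finset (Fin n)) (x : Fin n → ℤˣ) (i : Fin n) :
    chi S (flipCoord x i) = (if i ∈ S then -1 else 1) * chi S x := by
  have hfun : (fun j => ((flipCoord x i j : ℤˣ) : ℤ))
      = Function.update (fun j => ((x j : ℤˣ) : ℤ)) i (-(x i : ℤ)) := by
    funext j
    by_cases h : j = i
    · subst h; simp [flipCoord]
    · simp [flipCoord, Function.update_of_ne h]
  by_cases hi : i ∈ S
  · have := Finset.prod_update_of_mem hi (fun j => ((x j : ℤˣ) : ℤ)) (-(x i : ℤ))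
    simp only [chi, hi, if_true]
    calc ∏ j ∈ S, ((flipCoord x i j : ℤˣ) : ℤ)
        = ∏ j ∈ S, Function.update (fun j => ((x j : ℤˣ) : ℤ)) i (-(x i : ℤ)) j := by
          rw [show (fun j => ((flipCoord x i j : ℤˣ) : ℤ)) = _ from hfun]
      _ = (-(x i : ℤ)) * ∏ j ∈ S \ {i}, ((x j : ℤˣ) : ℤ) := this
      _ = -1 * ((x i : ℤ) * ∏ j ∈ S \ {i}, ((x j : ℤˣ) : ℤ)) := by ring
      _ = -1 * ∏ j ∈ S, ((x j : ℤˣ) : ℤ) := by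
          rw [← Finset.erase_eq]
          congr 1
          exact Finset.mul_prod_erase S (fun j => ((x j : ℤˣ) : ℤ)) hi
  · simp only [chi, hi, if_false, one_mul]
    apply Finset.prod_congr rfl
    intro j hj
    have : j ≠ i := fun h => hi (h ▸ hj)
    simp [flipCoord, Function.update_of_ne this]

end KAux

namespace KAux
variable {n : ℕ}

lemma flip_flip (x : Fin n → ℤˣ) (i : Fin n) : flipCoord (flipCoord x i) i = x := by
  funext j
  by_cases h : j = i
  · subst h; simp [flipCoord]
  · simp [flipCoord, Function.update_of_ne h]

/-- flipping as an equiv -/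
def flipEquiv (i : Fin n) : (Fin n → ℤˣ) ≃ (Fin n → ℤˣ) where
  toFun x := flipCoord x i
  invFun x := flipCoord x i
  left_inv x := flip_flip x i
  right_inv x := flip_flip x i

lemma card_cube : Fintype.card (Fin n → ℤˣ) = 2 ^ n := by
  simp [Fintype.card_fun, Fintype.card_units_int]

lemma sum_chi_empty : ∑ x : Fin n → ℤˣ, chi (∅ : Finset (Fin n)) x = 2 ^ n := by
  simp [chi_empty, card_cube]

lemma sum_chi_ne_empty {S : Finset (Fin n)} (hS : S ≠ ∅) :
    ∑ x : Fin n → ℤˣ, chi S x = 0 := by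
  obtain ⟨i, hi⟩ := Finset.nonempty_iff_ne_empty.2 hS
  have h1 : ∑ x : Fin n → ℤˣ, chi S (flipCoord x i) = ∑ x : Fin n → ℤˣ, chi S x :=
    Fintype.sum_equiv (flipEquiv i) _ _ (fun x => rfl)
  have h2 : ∑ x : Fin n → ℤˣ, chi S (flipCoord x i) = - ∑ x : Fin n → ℤˣ, chi S x := by
    rw [← Finset.sum_neg_distrib]
    exact Finset.sum_congr rfl fun x _ => by rw [chi_flip, if_pos hi]; ring
  linarith [h1, h2]

end KAux

namespace KAux
variable {n : ℕ}

lemma unit_mul_unit (u v : ℤˣ) : ((u : ℤ) * (v : ℤ)) = if u = v then 1 else -1 := by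
  rcases Int.units_eq_one_or u with h | h <;> rcases Int.units_eq_one_or v with h' | h' <;>
    subst h <;> subst h' <;> simp

lemma sum_S_chi (x y : Fin n → ℤˣ) :
    ∑ S : Finset (Fin n), chi S x * chi S y = if x = y then (2 : ℤ) ^ n else 0 := by
  have key : ∑ S : Finset (Fin n), chi S x * chi S y
      = ∏ i : Fin n, ((x i : ℤ) * (y i : ℤ) + 1) := by
    rw [Finset.prod_add]
    rw [← Finset.powerset_univ]
    apply Finset.sum_congr rfl
    intro S _
    simp [chi, Finset.prod_mul_distrib]
  rw [key]
  by_cases h : x = y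
  · subst h
    rw [if_pos rfl]
    have : ∀ i ∈ Finset.univ, ((x i : ℤ) * (x i : ℤ) + 1) = 2 := by
      intro i _
      rw [unit_mul_unit, if_pos rfl]; norm_num
    rw [Finset.prod_congr rfl this]
    simp
  · rw [if_neg h]
    obtain ⟨i, hi⟩ := Function.ne_iff.1 h
    apply Finset.prod_eq_zero (Finset.mem_univ i)
    rw [unit_mul_unit, if_neg hi]
    ring

/-- Fourier inversion -/
lemma inversion (f : (Fin n → ℤˣ) → ℤˣ) (x : Fin n → ℤˣ) :
    ∑ S : Finset (Fin n), coef f S * chi S x = 2 ^ n * (f x : ℤ) := by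
  unfold coef
  calc ∑ S : Finset (Fin n), (∑ y : Fin n → ℤˣ, (f y : ℤ) * chi S y) * chi S x
      = ∑ S : Finset (Fin n), ∑ y : Fin n → ℤˣ, (f y : ℤ) * (chi S y * chi S x) := by
        apply Finset.sum_congr rfl; intro S _; rw [Finset.sum_mul]
        apply Finset.sum_congr rfl; intro y _; ring
    _ = ∑ y : Fin n → ℤˣ, ∑ S : Finset (Fin n), (f y : ℤ) * (chi S y * chi S x) :=
        Finset.sum_comm
    _ = ∑ y : Fin n → ℤˣ, (f y : ℤ) * (if y = x then (2:ℤ)^n else 0) := by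
        apply Finset.sum_congr rfl; intro y _
        rw [← Finset.mul_sum, sum_S_chi]
    _ = 2 ^ n * (f x : ℤ) := by
        rw [Finset.sum_congr rfl (fun y _ => mul_ite (y = x) ((f y : ℤ)) _ _)]
        simp [Finset.sum_ite_eq']
        ring

/-- Parseval -/
lemma parseval (f : (Fin n → ℤˣ) → ℤˣ) :
    ∑ S : Finset (Fin n), (coef f S) ^ 2 = 4 ^ n := by
  calc ∑ S : Finset (Fin n), (coef f S) ^ 2
      = ∑ S : Finset (Fin n), ∑ x : Fin n → ℤˣ, (f x : ℤ) * (coef f S * chi S x) := by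
        apply Finset.sum_congr rfl; intro S _
        rw [sq, coef, Finset.mul_sum]
        apply Finset.sum_congr rfl; intro x _; ring
    _ = ∑ x : Fin n → ℤˣ, ∑ S : Finset (Fin n), (f x : ℤ) * (coef f S * chi S x) :=
        Finset.sum_comm
    _ = ∑ x : Fin n → ℤˣ, (2:ℤ)^n * ((f x : ℤ) * (f x : ℤ)) := by
        apply Finset.sum_congr rfl; intro x _
        rw [← Finset.mul_sum, inversion]; ring
    _ = ∑ x : Fin n → ℤˣ, (2:ℤ)^n := by
        apply Finset.sum_congr rfl; intro x _
        rw [unit_mul_unit, if_pos rfl, mul_one]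
    _ = 4 ^ n := by
        rw [Finset.sum_const, Finset.card_univ, card_cube]
        rw [show (4:ℤ)^n = (2^n : ℕ) • ((2:ℤ)^n) by push_cast; rw [show (4:ℤ) = 2*2 from rfl, mul_pow]; ring]

end KAux

namespace KAux
variable {n : ℕ}

lemma units_ne {u v : ℤˣ} (h : u ≠ v) : (u : ℤ) = -(v : ℤ) := by
  rcases Int.units_eq_one_or u with h1 | h1 <;> rcases Int.units_eq_one_or v with h2 | h2 <;>
    subst h1 <;> subst h2 <;> simp_all

lemma sum_flip {k : ℕ} (hkn : k ≤ n) {f : (Fin n → ℤˣ) → ℤˣ} (hf : IsKFun k f)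
    (x : Fin n → ℤˣ) :
    ∑ i : Fin n, (f (flipCoord x i) : ℤ) = ((n : ℤ) - 2 * k) * (f x : ℤ) := by
  classical
  set D := Finset.univ.filter (fun i => f (flipCoord x i) ≠ f x) with hD
  have hcard : D.card = k := by
    have : {i : Fin n | f (flipCoord x i) ≠ f x} = ↑D := by
      ext i; simp [hD]
    have h2 := hf x
    rw [this, Set.ncard_coe_finset] at h2
    exact h2
  have hsplit := Finset.sum_filter_add_sum_filter_not Finset.univ
    (fun i => f (flipCoord x i) ≠ f x) (fun i => (f (flipCoord x i) : ℤ))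
  have hA : ∑ i ∈ D, (f (flipCoord x i) : ℤ) = (k : ℤ) * (-(f x : ℤ)) := by
    rw [Finset.sum_congr rfl (fun i hi => units_ne (by simpa [hD] using hi))]
    rw [Finset.sum_const, hcard]
    push_cast; ring
  have hB : ∑ i ∈ Finset.univ.filter (fun i => ¬ f (flipCoord x i) ≠ f x),
      (f (flipCoord x i) : ℤ) = ((n : ℤ) - k) * (f x : ℤ) := by
    have hcard2 : (Finset.univ.filter (fun i => ¬ f (flipCoord x i) ≠ f x)).card = n - k := by
      have := Finset.card_filter_add_card_filter_not (s := Finset.univ)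
        (p := fun i => f (flipCoord x i) ≠ f x)
      rw [Finset.card_univ, Fintype.card_fin, ← hD] at this
      omega
    have : ∀ i ∈ Finset.univ.filter (fun i => ¬ f (flipCoord x i) ≠ f x),
        (f (flipCoord x i) : ℤ) = (f x : ℤ) := by
      intro i hi
      simp only [Finset.mem_filter, not_not] at hi
      rw [hi.2]
    rw [Finset.sum_congr rfl this, Finset.sum_const, hcard2, nsmul_eq_mul, Nat.cast_sub hkn]
  rw [← hsplit, ← hD, hA, hB]
  ring

lemma sum_flip_coef {k : ℕ} (hkn : k ≤ n) {f : (Fin n → ℤˣ) → ℤˣ} (hf : IsKFun k f)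
    (S : Finset (Fin n)) :
    ((n : ℤ) - 2 * k) * coef f S = ((n : ℤ) - 2 * S.card) * coef f S := by
  have lhs : ((n : ℤ) - 2 * k) * coef f S
      = ∑ x : Fin n → ℤˣ, (∑ i : Fin n, (f (flipCoord x i) : ℤ)) * chi S x := by
    rw [coef, Finset.mul_sum]
    apply Finset.sum_congr rfl; intro x _
    rw [sum_flip hkn hf x]; ring
  have swap : ∑ x : Fin n → ℤˣ, (∑ i : Fin n, (f (flipCoord x i) : ℤ)) * chi S x
      = ∑ i : Fin n, ∑ x : Fin n → ℤˣ, (f (flipCoord x i) : ℤ) * chi S x := by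
    rw [Finset.sum_congr rfl (fun x _ => Finset.sum_mul _ _ _)]
    exact Finset.sum_comm
  have inner : ∀ i : Fin n, ∑ x : Fin n → ℤˣ, (f (flipCoord x i) : ℤ) * chi S x
      = (if i ∈ S then -1 else 1) * coef f S := by
    intro i
    have step : ∑ x : Fin n → ℤˣ, (f (flipCoord x i) : ℤ) * chi S x
        = ∑ y : Fin n → ℤˣ, (f y : ℤ) * chi S (flipCoord y i) := by
      apply Fintype.sum_equiv (flipEquiv i)
      intro x
      show (f (flipCoord x i) : ℤ) * chi S x = (f (flipCoord x i) : ℤ) * chi S (flipCoord (flipCoord x i) i)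
      rw [flip_flip]
    rw [step, coef, Finset.mul_sum]
    apply Finset.sum_congr rfl; intro y _
    rw [chi_flip]; ring
  have eps : ∑ i : Fin n, (if i ∈ S then (-1 : ℤ) else 1) = (n : ℤ) - 2 * S.card := by
    rw [Finset.sum_ite, Finset.sum_const, Finset.sum_const]
    have h1 : (Finset.univ.filter (fun i => i ∈ S)).card = S.card := by
      congr 1; exact Finset.filter_univ_mem S
    have h2 : (Finset.univ.filter (fun i => i ∉ S)).card = n - S.card := by
      have := Finset.card_filter_add_card_filter_not (s := Finset.univ)
        (p := fun i => i ∈ S)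
      rw [Finset.card_univ, Fintype.card_fin, h1] at this
      omega
    rw [h1, h2, nsmul_eq_mul, nsmul_eq_mul, Nat.cast_sub (Finset.card_le_card (Finset.subset_univ S) |>.trans (by rw [Finset.card_univ, Fintype.card_fin]))]
    ring
  rw [lhs, swap, Finset.sum_congr rfl (fun i _ => inner i), ← Finset.sum_mul, eps]

lemma coef_eq_zero {k : ℕ} (hkn : k ≤ n) {f : (Fin n → ℤˣ) → ℤˣ} (hf : IsKFun k f)
    {S : Finset (Fin n)} (hS : S.card ≠ k) : coef f S = 0 := by
  have h := sum_flip_coef hkn hf S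
  have h2 : (2 * ((S.card : ℤ) - k)) * coef f S = 0 := by linarith
  rcases mul_eq_zero.1 h2 with h3 | h3
  · exfalso
    have : (S.card : ℤ) = k := by linarith
    exact hS (by exact_mod_cast this)
  · exact h3

end KAux

namespace KAux
variable {n : ℕ}

/-- set the coordinates outside `S` to 1 -/
def msk (S : Finset (Fin n)) (a : Fin n → ℤˣ) : Fin n → ℤˣ := fun i => if i ∈ S then a i else 1

lemma chi_msk (T S : Finset (Fin n)) (a : Fin n → ℤˣ) :
    chi T (msk S a) = chi (T ∩ S) a := by
  unfold chi msk
  rw [← Finset.prod_ite_mem T S (fun i => ((a i : ℤˣ) : ℤ))]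
  apply Finset.prod_congr rfl
  intro i _
  by_cases h : i ∈ S <;> simp [h]

lemma chi_inter_mul (T S : Finset (Fin n)) (a : Fin n → ℤˣ) :
    chi (T ∩ S) a * chi S a = chi (S \ T) a := by
  have hdisj : Disjoint (T ∩ S) (S \ T) := by
    rw [Finset.disjoint_left]
    intro i hi hi2
    exact (Finset.mem_sdiff.1 hi2).2 (Finset.mem_inter.1 hi).1
  have hunion : (T ∩ S) ∪ (S \ T) = S := by
    ext i
    simp only [Finset.mem_union, Finset.mem_inter, Finset.mem_sdiff]
    tauto
  have h : chi ((T ∩ S) ∪ (S \ T)) a = chi (T ∩ S) a * chi (S \ T) a :=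
    Finset.prod_union hdisj
  rw [hunion] at h
  rw [h, ← mul_assoc, chi_mul_self, one_mul]

lemma sum_chi_sdiff (T S : Finset (Fin n)) :
    ∑ a : Fin n → ℤˣ, chi (S \ T) a = if S ⊆ T then (2:ℤ)^n else 0 := by
  by_cases h : S ⊆ T
  · rw [if_pos h, Finset.sdiff_eq_empty_iff_subset.2 h, sum_chi_empty]
  · rw [if_neg h, sum_chi_ne_empty]
    intro hc
    exact h (Finset.sdiff_eq_empty_iff_subset.1 hc)

lemma H_eq_coef {k : ℕ} (hkn : k ≤ n) {f : (Fin n → ℤˣ) → ℤˣ} (hf : IsKFun k f)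
    {S : Finset (Fin n)} (hS : S.card = k) :
    ∑ a : Fin n → ℤˣ, (f (msk S a) : ℤ) * chi S (msk S a) = coef f S := by
  have step1 : (2:ℤ)^n * ∑ a : Fin n → ℤˣ, (f (msk S a) : ℤ) * chi S (msk S a)
      = ∑ T : Finset (Fin n), coef f T * ∑ a : Fin n → ℤˣ, chi (S \ T) a := by
    rw [Finset.mul_sum]
    calc ∑ a : Fin n → ℤˣ, (2:ℤ)^n * ((f (msk S a) : ℤ) * chi S (msk S a))
        = ∑ a : Fin n → ℤˣ, ∑ T : Finset (Fin n), coef f T * (chi T (msk S a) * chi S (msk S a)) := by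
          apply Finset.sum_congr rfl; intro a _
          rw [← mul_assoc, ← inversion f (msk S a), Finset.sum_mul]
          apply Finset.sum_congr rfl; intro T _; ring
      _ = ∑ T : Finset (Fin n), ∑ a : Fin n → ℤˣ, coef f T * (chi T (msk S a) * chi S (msk S a)) :=
          Finset.sum_comm
      _ = ∑ T : Finset (Fin n), coef f T * ∑ a : Fin n → ℤˣ, chi (S \ T) a := by
          apply Finset.sum_congr rfl; intro T _
          rw [Finset.mul_sum]
          apply Finset.sum_congr rfl; intro a _
          rw [chi_msk, chi_msk, Finset.inter_self, chi_inter_mul]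
  have step2 : ∑ T : Finset (Fin n), coef f T * ∑ a : Fin n → ℤˣ, chi (S \ T) a
      = (2:ℤ)^n * coef f S := by
    calc ∑ T : Finset (Fin n), coef f T * ∑ a : Fin n → ℤˣ, chi (S \ T) a
        = ∑ T : Finset (Fin n), (if T = S then (2:ℤ)^n * coef f S else 0) := by
          apply Finset.sum_congr rfl; intro T _
          rw [sum_chi_sdiff]
          by_cases hTS : T = S
          · subst hTS
            rw [if_pos (Finset.Subset.refl T), if_pos rfl]; ring
          · rw [if_neg hTS]
            by_cases hsub : S ⊆ T
            · rw [if_pos hsub]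
              have hcard : T.card ≠ k := by
                have : S ⊂ T := Finset.ssubset_iff_subset_ne.2 ⟨hsub, fun h => hTS h.symm⟩
                have := Finset.card_lt_card this
                omega
              rw [coef_eq_zero hkn hf hcard]; ring
            · rw [if_neg hsub]; ring
      _ = (2:ℤ)^n * coef f S := by
          rw [Finset.sum_ite_eq' Finset.univ S (fun _ => (2:ℤ)^n * coef f S)]
          rw [if_pos (Finset.mem_univ S)]
  have h2n : ((2:ℤ)^n) ≠ 0 := by positivity
  exact mul_left_cancel₀ h2n (step1.trans step2)

end KAux

namespace KAux
variable {n : ℕ}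

lemma msk_eval (S : Finset (Fin n))
    (u : {i : Fin n // i ∈ S} → ℤˣ) (v : {i : Fin n // ¬ i ∈ S} → ℤˣ) :
    msk S ((Equiv.piEquivPiSubtypeProd (fun i => i ∈ S) (fun _ => ℤˣ)).symm (u, v))
      = fun i => if h : i ∈ S then u ⟨i, h⟩ else 1 := by
  funext i
  by_cases h : i ∈ S
  · simp [msk, h, Equiv.piEquivPiSubtypeProd]
  · simp [msk, h]

lemma unit_int_val (u : ℤˣ) : (u : ℤ) = 1 ∨ (u : ℤ) = -1 := by
  rcases Int.units_eq_one_or u with h | h <;> rw [h] <;> simp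

lemma H_dvd {k : ℕ} (hk : 1 ≤ k) (hkn : k ≤ n) (f : (Fin n → ℤˣ) → ℤˣ)
    {S : Finset (Fin n)} (hS : S.card = k) :
    (2:ℤ)^(n - k + 1) ∣ ∑ a : Fin n → ℤˣ, (f (msk S a) : ℤ) * chi S (msk S a) := by
  classical
  set e := (Equiv.piEquivPiSubtypeProd (fun i => i ∈ S) (fun _ => ℤˣ)).symm with he
  set G : ({i : Fin n // i ∈ S} → ℤˣ) → ℤ :=
    fun u => (f (fun i => if h : i ∈ S then u ⟨i, h⟩ else 1) : ℤ)
      * chi S (fun i => if h : i ∈ S then u ⟨i, h⟩ else 1) with hG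
  have hsum : ∑ a : Fin n → ℤˣ, (f (msk S a) : ℤ) * chi S (msk S a)
      = ∑ p : ({i : Fin n // i ∈ S} → ℤˣ) × ({i : Fin n // ¬ i ∈ S} → ℤˣ),
          (f (msk S (e p)) : ℤ) * chi S (msk S (e p)) :=
    (Fintype.sum_equiv e _ _ (fun p => rfl)).symm
  rw [hsum, Fintype.sum_prod_type]
  have hinner : ∀ u, ∑ v : {i : Fin n // ¬ i ∈ S} → ℤˣ,
      (f (msk S (e (u, v))) : ℤ) * chi S (msk S (e (u, v))) = (2:ℤ)^(n - k) * G u := by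
    intro u
    have : ∀ v : {i : Fin n // ¬ i ∈ S} → ℤˣ,
        (f (msk S (e (u, v))) : ℤ) * chi S (msk S (e (u, v))) = G u := by
      intro v
      rw [he, msk_eval S u v, hG]
    rw [Finset.sum_congr rfl (fun v _ => this v), Finset.sum_const, Finset.card_univ]
    have hcardv : Fintype.card ({i : Fin n // ¬ i ∈ S} → ℤˣ) = 2 ^ (n - k) := by
      rw [Fintype.card_fun, Fintype.card_units_int]
      congr 1
      rw [Fintype.card_subtype_compl, Fintype.card_fin]
      congr 1
      rw [Fintype.card_coe, hS]
    rw [hcardv, nsmul_eq_mul]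
    push_cast
    ring
  rw [Finset.sum_congr rfl (fun u _ => hinner u), ← Finset.mul_sum]
  have heven : (2:ℤ) ∣ ∑ u : {i : Fin n // i ∈ S} → ℤˣ, G u := by
    apply Int.dvd_of_emod_eq_zero
    rw [Finset.sum_int_mod]
    have : ∀ u ∈ Finset.univ, G u % 2 = 1 % 2 := by
      intro u _
      have h1 := unit_int_val (f (fun i => if h : i ∈ S then u ⟨i, h⟩ else 1))
      have h2 := chi_unit S (fun i => if h : i ∈ S then u ⟨i, h⟩ else 1)
      rcases h1 with h | h <;> rcases h2 with h' | h' <;> simp [hG, h, h']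
    rw [Finset.sum_congr rfl this, ← Finset.sum_int_mod, Finset.sum_const, Finset.card_univ,
      Fintype.card_fun, Fintype.card_units_int, Fintype.card_coe, hS]
    simp only [nsmul_eq_mul, mul_one]
    have : (2:ℤ) ∣ ((2^k : ℕ) : ℤ) := by
      push_cast
      exact dvd_pow_self 2 (by omega)
    omega
  obtain ⟨w, hw⟩ := heven
  rw [hw, pow_succ]
  exact ⟨w, by ring⟩

lemma coef_dvd {k : ℕ} (hk : 1 ≤ k) (hkn : k ≤ n) {f : (Fin n → ℤˣ) → ℤˣ} (hf : IsKFun k f)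
    {S : Finset (Fin n)} (hS : S.card = k) :
    (2:ℤ)^(n - k + 1) ∣ coef f S := by
  rw [← H_eq_coef hkn hf hS]
  exact H_dvd hk hkn f hS

end KAux

namespace KAux
variable {n : ℕ}

lemma finite_sphere (q t : ℕ) : Finite {x : Fin t → ℤ // ∑ i, (x i) ^ 2 = (q : ℤ)} := by
  have habs : ∀ x : Fin t → ℤ, (∑ i, (x i) ^ 2 = (q : ℤ)) → ∀ i, |x i| ≤ (q : ℤ) := by
    intro x hx i
    have h2 : (x i) ^ 2 ≤ (q : ℤ) := by
      rw [← hx]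
      exact Finset.single_le_sum (fun j _ => sq_nonneg (x j)) (Finset.mem_univ i)
    nlinarith [sq_abs (x i), abs_nonneg (x i)]
  have hsub : {x : Fin t → ℤ | ∑ i, (x i) ^ 2 = (q : ℤ)}
      ⊆ Set.pi Set.univ (fun _ : Fin t => Set.Icc (-(q : ℤ)) (q : ℤ)) := by
    intro x hx i _
    have := habs x hx i
    exact ⟨neg_le_of_abs_le this, le_of_abs_le this⟩
  have hfin : (Set.pi Set.univ (fun _ : Fin t => Set.Icc (-(q : ℤ)) (q : ℤ))).Finite :=
    Set.Finite.pi (fun _ => Set.finite_Icc _ _)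
  exact (hfin.subset hsub).to_subtype

variable {k : ℕ}

/-- level-k sets enumerated by `Fin (n.choose k)` -/
noncomputable def eqv (n k : ℕ) : {S : Finset (Fin n) // S.card = k} ≃ Fin (n.choose k) :=
  Fintype.equivFinOfCardEq (by rw [Fintype.card_finset_len, Fintype.card_fin])

/-- normalized Fourier coefficient vector -/
noncomputable def vec (n k : ℕ) (f : (Fin n → ℤˣ) → ℤˣ) : Fin (n.choose k) → ℤ :=
  fun j => coef f ((eqv n k).symm j).1 / 2 ^ (n - k + 1)

lemma vec_spec (hk : 1 ≤ k) (hkn : k ≤ n) {f : (Fin n → ℤˣ) → ℤˣ} (hf : IsKFun k f)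
    (j : Fin (n.choose k)) :
    (2:ℤ) ^ (n - k + 1) * vec n k f j = coef f ((eqv n k).symm j).1 :=
  Int.mul_ediv_cancel' (coef_dvd hk hkn hf ((eqv n k).symm j).2)

lemma parseval_level (hk : 1 ≤ k) (hkn : k ≤ n) {f : (Fin n → ℤˣ) → ℤˣ} (hf : IsKFun k f) :
    ∑ j : Fin (n.choose k), (coef f ((eqv n k).symm j).1) ^ 2 = 4 ^ n := by
  classical
  have h1 : ∑ j : Fin (n.choose k), (coef f ((eqv n k).symm j).1) ^ 2
      = ∑ S : {S : Finset (Fin n) // S.card = k}, (coef f S.1) ^ 2 :=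
    (Fintype.sum_equiv (eqv n k) _ _ (fun S => by rw [Equiv.symm_apply_apply])).symm
  have h2 : ∑ S : {S : Finset (Fin n) // S.card = k}, (coef f S.1) ^ 2
      = ∑ S ∈ Finset.univ.filter (fun S : Finset (Fin n) => S.card = k), (coef f S) ^ 2 :=
    (Finset.sum_subtype (p := fun S : Finset (Fin n) => S.card = k)
      (Finset.univ.filter (fun S : Finset (Fin n) => S.card = k))
      (fun S => by simp) (fun S => (coef f S) ^ 2)).symm
  have h3 : ∑ S ∈ Finset.univ.filter (fun S : Finset (Fin n) => S.card = k), (coef f S) ^ 2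
      = ∑ S : Finset (Fin n), (coef f S) ^ 2 := by
    apply Finset.sum_subset (Finset.filter_subset _ _)
    intro S _ hS
    simp only [Finset.mem_filter, Finset.mem_univ, true_and] at hS
    rw [coef_eq_zero hkn hf hS]
    ring
  rw [h1, h2, h3, parseval]

lemma vec_sum_sq (hk : 1 ≤ k) (hkn : k ≤ n) {f : (Fin n → ℤˣ) → ℤˣ} (hf : IsKFun k f) :
    ∑ j : Fin (n.choose k), (vec n k f j) ^ 2 = (4:ℤ) ^ (k - 1) := by
  have key : (4:ℤ) ^ (n - k + 1) * ∑ j : Fin (n.choose k), (vec n k f j) ^ 2 = 4 ^ n := by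
    rw [Finset.mul_sum]
    rw [← parseval_level hk hkn hf]
    apply Finset.sum_congr rfl
    intro j _
    rw [← vec_spec hk hkn hf j]
    rw [mul_pow, show ((2:ℤ) ^ (n - k + 1)) ^ 2 = 4 ^ (n - k + 1) by
      rw [← pow_mul, mul_comm (n - k + 1) 2, pow_mul]; norm_num]
  have hsplit : (4:ℤ) ^ n = 4 ^ (n - k + 1) * 4 ^ (k - 1) := by
    rw [← pow_add]
    congr 1
    omega
  rw [hsplit] at key
  exact mul_left_cancel₀ (by positivity) key

lemma coef_eq_of_vec_eq (hk : 1 ≤ k) (hkn : k ≤ n) {f g : (Fin n → ℤˣ) → ℤˣ}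
    (hf : IsKFun k f) (hg : IsKFun k g) (h : vec n k f = vec n k g) :
    ∀ S : Finset (Fin n), coef f S = coef g S := by
  intro S
  by_cases hS : S.card = k
  · have hj : ((eqv n k).symm ((eqv n k) ⟨S, hS⟩)).1 = S := by
      rw [Equiv.symm_apply_apply]
    calc coef f S = (2:ℤ) ^ (n - k + 1) * vec n k f ((eqv n k) ⟨S, hS⟩) := by
          rw [vec_spec hk hkn hf, hj]
      _ = (2:ℤ) ^ (n - k + 1) * vec n k g ((eqv n k) ⟨S, hS⟩) := by rw [h]
      _ = coef g S := by rw [vec_spec hk hkn hg, hj]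
  · rw [coef_eq_zero hkn hf hS, coef_eq_zero hkn hg hS]

lemma eq_of_coef_eq {f g : (Fin n → ℤˣ) → ℤˣ}
    (h : ∀ S : Finset (Fin n), coef f S = coef g S) : f = g := by
  funext x
  have h1 : (2:ℤ) ^ n * (f x : ℤ) = 2 ^ n * (g x : ℤ) := by
    rw [← inversion f x, ← inversion g x]
    exact Finset.sum_congr rfl (fun S _ => by rw [h S])
  have h2 : (f x : ℤ) = (g x : ℤ) := mul_left_cancel₀ (by positivity) h1
  exact Units.ext h2

end KAux

/-- `F(n,k) ≤ S(4^(k-1), C(n,k))`. -/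
theorem numKFun_le_numSqRep (n k : ℕ) (hk : 1 ≤ k) (hkn : k ≤ n) :
    numKFun n k ≤ numSqRep (4 ^ (k - 1)) (n.choose k) := by
  have hfin := KAux.finite_sphere (4 ^ (k - 1)) (n.choose k)
  apply Nat.card_le_card_of_injective
    (f := fun F : {f : (Fin n → ℤˣ) → ℤˣ // IsKFun k f} =>
      (⟨KAux.vec n k F.1, by
        rw [KAux.vec_sum_sq hk hkn F.2]
        push_cast
        ring⟩ : {x : Fin (n.choose k) → ℤ // ∑ i, (x i) ^ 2 = ((4 ^ (k - 1) : ℕ) : ℤ)}))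
  intro F G hFG
  have hvec : KAux.vec n k F.1 = KAux.vec n k G.1 := congrArg Subtype.val hFG
  exact Subtype.ext (KAux.eq_of_coef_eq (KAux.coef_eq_of_vec_eq hk hkn F.2 G.2 hvec))
end

section
/- Let 0 ≤ k ≤ n be integers with n ≥ 2k. Then 2^{2^k} ≤ 2^{2k+1}·(2k)!·G(n,k). -/
/-! ### Auxiliary material -/

section Helpers

lemma u_neg_eq_iff : ∀ u v : ℤˣ, (-u = v) ↔ ¬ u = v := by decide
lemma u_mul_neg_ne_iff : ∀ u v w : ℤˣ, (u * -w ≠ v * w) ↔ u = v := by decide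
lemma u_mul_ne_iff : ∀ u v w : ℤˣ, (u * w ≠ v * w) ↔ ¬ u = v := by decide
lemma u_sq (u : ℤˣ) : u * u = 1 := Int.units_mul_self u

/-- `f` depends on coordinate `i`. -/
def Dep {n : ℕ} (f : (Fin n → ℤˣ) → ℤˣ) (i : Fin n) : Prop :=
  ∃ x, f (flipCoord x i) ≠ f x

lemma flip_self {n : ℕ} (x : Fin n → ℤˣ) (i : Fin n) : flipCoord x i i = -(x i) :=
  Function.update_self i _ x

lemma flip_ne {n : ℕ} (x : Fin n → ℤˣ) {i j : Fin n} (h : j ≠ i) : flipCoord x i j = x j :=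
  Function.update_of_ne h _ x

lemma eval_eq_of_agree_aux {n : ℕ} (f : (Fin n → ℤˣ) → ℤˣ) (s : Finset (Fin n)) :
    ∀ (y y' : Fin n → ℤˣ), (∀ i, y i ≠ y' i → i ∈ s) → (∀ i, Dep f i → y i = y' i) →
      f y = f y' := by
  induction s using Finset.induction_on with
  | empty =>
      intro y y' hs _
      have : y = y' := funext fun i => by by_contra hne; simpa using hs i hne
      rw [this]
  | @insert a s ha ih =>
      intro y y' hs hdep
      by_cases hya : y a = y' a
      · refine ih y y' (fun i hne => ?_) hdep
        rcases Finset.mem_insert.1 (hs i hne) with h | h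
        · exact absurd (by rw [h]; exact hya) hne
        · exact h
      · have hnd : ¬ Dep f a := fun hd => hya (hdep a hd)
        have h1 : f (flipCoord y a) = f y := by
          by_contra hc; exact hnd ⟨y, hc⟩
        have h2 : f (flipCoord y a) = f y' := by
          refine ih (flipCoord y a) y' (fun i hne => ?_) (fun i hd => ?_)
          · by_cases hia : i = a
            · subst hia
              rw [flip_self] at hne
              exact absurd ((u_neg_eq_iff _ _).2 hya) hne
            · rw [flip_ne y hia] at hne
              rcases Finset.mem_insert.1 (hs i hne) with h | h
              · exact absurd h hia
              · exact h
          · by_cases hia : i = a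
            · exact absurd (by rw [← hia]; exact hd) hnd
            · rw [flip_ne y hia]; exact hdep i hd
        rw [← h1, h2]

lemma eval_eq_of_agree {n : ℕ} (f : (Fin n → ℤˣ) → ℤˣ) (y y' : Fin n → ℤˣ)
    (h : ∀ i, Dep f i → y i = y' i) : f y = f y' :=
  eval_eq_of_agree_aux f Finset.univ y y' (fun i _ => Finset.mem_univ i) h

lemma dep_congr {n : ℕ} {f g : (Fin n → ℤˣ) → ℤˣ} {ε : ℤˣ} {α : Fin n → ℤˣ}
    {σ : Equiv.Perm (Fin n)}
    (h : ∀ x, f x = ε * g (fun i => α i * x (σ i))) (j : Fin n) :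
    Dep f j ↔ Dep g (σ.symm j) := by
  have key : ∀ x : Fin n → ℤˣ,
      (fun i => α i * (flipCoord x j) (σ i)) = flipCoord (fun i => α i * x (σ i)) (σ.symm j) := by
    intro x; funext i
    by_cases hi : i = σ.symm j
    · subst hi
      rw [flip_self, Equiv.apply_symm_apply, flip_self, mul_neg]
    · have hσi : σ i ≠ j := fun hc => hi (by rw [← hc, Equiv.symm_apply_apply])
      rw [flip_ne x hσi, flip_ne _ hi]
  constructor
  · rintro ⟨x, hx⟩
    refine ⟨fun i => α i * x (σ i), fun hc => hx ?_⟩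
    rw [h (flipCoord x j), h x, key x, hc]
  · rintro ⟨y, hy⟩
    have hxy : (fun i => α i * ((fun m => α (σ.symm m) * y (σ.symm m)) (σ i))) = y := by
      funext i
      simp only [Equiv.symm_apply_apply]
      rw [← mul_assoc, u_sq, one_mul]
    refine ⟨fun m => α (σ.symm m) * y (σ.symm m), fun hc => hy ?_⟩
    have e1 := h (flipCoord (fun m => α (σ.symm m) * y (σ.symm m)) j)
    have e2 := h (fun m => α (σ.symm m) * y (σ.symm m))
    rw [key, hxy] at e1
    rw [hxy] at e2
    have := e1.symm.trans (hc.trans e2)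
    exact mul_left_cancel this

lemma isom_refl {n : ℕ} (f : (Fin n → ℤˣ) → ℝ) : Isom f f :=
  ⟨1, fun _ => 1, Equiv.refl _, fun x => by simp⟩

lemma isom_symm {n : ℕ} {f g : (Fin n → ℤˣ) → ℝ} (h : Isom f g) : Isom g f := by
  obtain ⟨ε, α, σ, h⟩ := h
  refine ⟨ε, fun i => α (σ.symm i), σ.symm, fun y => ?_⟩
  have hx := h (fun m => α (σ.symm m) * y (σ.symm m))
  have hxy : (fun i => α i * ((fun m => α (σ.symm m) * y (σ.symm m)) (σ i))) = y := by
    funext i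
    simp only [Equiv.symm_apply_apply]
    rw [← mul_assoc, u_sq, one_mul]
  rw [hxy] at hx
  rw [hx, ← mul_assoc]
  have hεε : ((ε : ℤ) : ℝ) * ((ε : ℤ) : ℝ) = 1 := by
    rcases Int.units_eq_one_or ε with h1 | h1 <;> simp [h1]
  rw [hεε, one_mul]

lemma isom_trans {n : ℕ} {f g h : (Fin n → ℤˣ) → ℝ} (h1 : Isom f g) (h2 : Isom g h) :
    Isom f h := by
  obtain ⟨ε₁, α₁, σ₁, h1⟩ := h1
  obtain ⟨ε₂, α₂, σ₂, h2⟩ := h2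
  refine ⟨ε₁ * ε₂, fun i => α₂ i * α₁ (σ₂ i), σ₂.trans σ₁, fun x => ?_⟩
  rw [h1 x, h2]
  have harg : (fun i => α₂ i * ((fun m => α₁ m * x (σ₁ m)) (σ₂ i)))
      = (fun i => (α₂ i * α₁ (σ₂ i)) * x ((σ₂.trans σ₁) i)) := by
    funext i
    rw [Equiv.trans_apply, mul_assoc]
  rw [harg]
  push_cast
  ring

lemma isom_units {n : ℕ} {f g : (Fin n → ℤˣ) → ℤˣ} (h : Isom (toReal f) (toReal g)) :
    ∃ (ε : ℤˣ) (α : Fin n → ℤˣ) (σ : Equiv.Perm (Fin n)),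
      ∀ x, f x = ε * g (fun i => α i * x (σ i)) := by
  obtain ⟨ε, α, σ, h⟩ := h
  refine ⟨ε, α, σ, fun x => ?_⟩
  have h1 := h x
  simp only [toReal] at h1
  have h2 : ((f x : ℤ) : ℝ) = (((ε * g (fun i => α i * x (σ i)) : ℤˣ) : ℤ) : ℝ) := by
    push_cast
    exact h1
  exact Units.ext (by exact_mod_cast h2)

lemma exists_perm_extend {m : ℕ} {γ : Type*} [Finite γ] (φ ψ : γ → Fin m)
    (hφ : Function.Injective φ) (hψ : Function.Injective ψ) :
    ∃ π : Equiv.Perm (Fin m), ∀ r, π (φ r) = ψ r := by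
  classical
  cases nonempty_fintype γ
  let e : ↥(Set.range φ) ≃ ↥(Set.range ψ) :=
    (Equiv.ofInjective φ hφ).symm.trans (Equiv.ofInjective ψ hψ)
  have hcard : Fintype.card ↥((Set.range φ)ᶜ) = Fintype.card ↥((Set.range ψ)ᶜ) := by
    rw [Fintype.card_compl_set, Fintype.card_compl_set]
    congr 1
    exact Fintype.card_congr e
  let ec : ↥((Set.range φ)ᶜ) ≃ ↥((Set.range ψ)ᶜ) := Fintype.equivOfCardEq hcard
  refine ⟨(Equiv.Set.sumCompl (Set.range φ)).symm.trans
      ((e.sumCongr ec).trans (Equiv.Set.sumCompl (Set.range ψ))), fun r => ?_⟩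
  have hmem : φ r ∈ Set.range φ := ⟨r, rfl⟩
  have h1 : (Equiv.Set.sumCompl (Set.range φ)).symm (φ r) = Sum.inl ⟨φ r, hmem⟩ :=
    Equiv.Set.sumCompl_symm_apply_of_mem hmem
  have h2 : (⟨φ r, hmem⟩ : ↥(Set.range φ)) = Equiv.ofInjective φ hφ r := by
    apply Subtype.ext
    rfl
  simp only [Equiv.trans_apply, h1, Equiv.sumCongr_apply, Sum.map_inl, h2, e,
    Equiv.symm_apply_apply]
  rfl

end Helpers

/-! ### The construction of `2^(2^k)` many `k`-functions -/

section Construct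

variable {n k : ℕ}

def i1 (h2k : 2 * k ≤ n) (j : Fin k) : Fin n := ⟨j.1, by have := j.2; omega⟩
def i2 (h2k : 2 * k ≤ n) (j : Fin k) : Fin n := ⟨k + j.1, by have := j.2; omega⟩

def zz (h2k : 2 * k ≤ n) (x : Fin n → ℤˣ) : Fin k → ℤˣ :=
  fun j => x (i1 h2k j) * x (i2 h2k j)

def pp (h2k : 2 * k ≤ n) (x : Fin n → ℤˣ) : ℤˣ := ∏ j : Fin k, x (i1 h2k j)

def fg (h2k : 2 * k ≤ n) (g : (Fin k → ℤˣ) → ℤˣ) (x : Fin n → ℤˣ) : ℤˣ :=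
  g (zz h2k x) * pp h2k x

variable (h2k : 2 * k ≤ n)

lemma i1_ne_i1 {j j' : Fin k} (h : j' ≠ j) : i1 h2k j' ≠ i1 h2k j := by
  simp only [i1, ne_eq, Fin.mk.injEq]
  exact fun hc => h (Fin.ext hc)

lemma i2_ne_i1 (j j' : Fin k) : i2 h2k j' ≠ i1 h2k j := by
  have h1 := j.2
  simp only [i1, i2, ne_eq, Fin.mk.injEq]
  omega

lemma i2_ne_i2 {j j' : Fin k} (h : j' ≠ j) : i2 h2k j' ≠ i2 h2k j := by
  simp only [i2, ne_eq, Fin.mk.injEq]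
  exact fun hc => h (Fin.ext (by omega))

lemma zz_flip1 (x : Fin n → ℤˣ) (j : Fin k) :
    zz h2k (flipCoord x (i1 h2k j)) = flipCoord (zz h2k x) j := by
  funext j'
  by_cases hj : j' = j
  · subst hj
    show flipCoord x (i1 h2k j') (i1 h2k j') * flipCoord x (i1 h2k j') (i2 h2k j')
        = flipCoord (zz h2k x) j' j'
    rw [flip_self, flip_ne x (i2_ne_i1 h2k j' j'), flip_self, neg_mul]
    rfl
  · show flipCoord x (i1 h2k j) (i1 h2k j') * flipCoord x (i1 h2k j) (i2 h2k j')
        = flipCoord (zz h2k x) j j'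
    rw [flip_ne x (i1_ne_i1 h2k hj), flip_ne x (i2_ne_i1 h2k j j'), flip_ne _ hj]
    rfl

lemma zz_flip2 (x : Fin n → ℤˣ) (j : Fin k) :
    zz h2k (flipCoord x (i2 h2k j)) = flipCoord (zz h2k x) j := by
  funext j'
  by_cases hj : j' = j
  · subst hj
    show flipCoord x (i2 h2k j') (i1 h2k j') * flipCoord x (i2 h2k j') (i2 h2k j')
        = flipCoord (zz h2k x) j' j'
    rw [flip_ne x (Ne.symm (i2_ne_i1 h2k j' j')), flip_self, flip_self, mul_neg]
    rfl
  · show flipCoord x (i2 h2k j) (i1 h2k j') * flipCoord x (i2 h2k j) (i2 h2k j')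
        = flipCoord (zz h2k x) j j'
    rw [flip_ne x (Ne.symm (i2_ne_i1 h2k j' j)), flip_ne x (i2_ne_i2 h2k hj), flip_ne _ hj]
    rfl

lemma pp_flip1 (x : Fin n → ℤˣ) (j : Fin k) :
    pp h2k (flipCoord x (i1 h2k j)) = - pp h2k x := by
  classical
  have step : ∀ j' : Fin k,
      flipCoord x (i1 h2k j) (i1 h2k j') = (if j' = j then (-1 : ℤˣ) else 1) * x (i1 h2k j') := by
    intro j'
    by_cases hj : j' = j
    · subst hj
      rw [flip_self, if_pos rfl, neg_one_mul]
    · rw [flip_ne x (i1_ne_i1 h2k hj), if_neg hj, one_mul]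
  show (∏ j' : Fin k, flipCoord x (i1 h2k j) (i1 h2k j')) = - pp h2k x
  rw [Finset.prod_congr rfl (fun j' _ => step j'), Finset.prod_mul_distrib,
    Finset.prod_ite_eq' Finset.univ j (fun _ => (-1 : ℤˣ))]
  simp [pp, neg_one_mul]

lemma pp_flip2 (x : Fin n → ℤˣ) (j : Fin k) :
    pp h2k (flipCoord x (i2 h2k j)) = pp h2k x := by
  refine Finset.prod_congr rfl (fun j' _ => ?_)
  exact flip_ne x (Ne.symm (i2_ne_i1 h2k j' j))

lemma fg_local (g : (Fin k → ℤˣ) → ℤˣ) (x x' : Fin n → ℤˣ)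
    (hagree : ∀ i : Fin n, i.1 < 2 * k → x i = x' i) : fg h2k g x = fg h2k g x' := by
  have hz : zz h2k x = zz h2k x' := by
    funext j
    have h1 := j.2
    show x (i1 h2k j) * x (i2 h2k j) = x' (i1 h2k j) * x' (i2 h2k j)
    rw [hagree (i1 h2k j) (show (j : ℕ) < 2 * k by omega),
      hagree (i2 h2k j) (show k + (j : ℕ) < 2 * k by omega)]
  have hp : pp h2k x = pp h2k x' := by
    refine Finset.prod_congr rfl (fun j _ => ?_)
    have h1 := j.2
    exact hagree (i1 h2k j) (show (j : ℕ) < 2 * k by omega)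
  unfold fg
  rw [hz, hp]

lemma fg_flip_hi (g : (Fin k → ℤˣ) → ℤˣ) (x : Fin n → ℤˣ) {i : Fin n} (hi : 2 * k ≤ i.1) :
    fg h2k g (flipCoord x i) = fg h2k g x := by
  refine fg_local h2k g _ x (fun m hm => ?_)
  exact flip_ne x (fun hc => by rw [hc] at hm; omega)

lemma fg_flip1 (g : (Fin k → ℤˣ) → ℤˣ) (x : Fin n → ℤˣ) (j : Fin k) :
    fg h2k g (flipCoord x (i1 h2k j)) = g (flipCoord (zz h2k x) j) * (- pp h2k x) := by
  unfold fg
  rw [zz_flip1, pp_flip1]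

lemma fg_flip2 (g : (Fin k → ℤˣ) → ℤˣ) (x : Fin n → ℤˣ) (j : Fin k) :
    fg h2k g (flipCoord x (i2 h2k j)) = g (flipCoord (zz h2k x) j) * pp h2k x := by
  unfold fg
  rw [zz_flip2, pp_flip2]

lemma isKFun_fg (g : (Fin k → ℤˣ) → ℤˣ) : IsKFun k (fg h2k g) := by
  classical
  intro x
  set φ : Fin k → Fin n :=
    fun j => if g (flipCoord (zz h2k x) j) ≠ g (zz h2k x) then i2 h2k j else i1 h2k j with hφ
  have hset : {i : Fin n | fg h2k g (flipCoord x i) ≠ fg h2k g x} = Set.range φ := by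
    ext i
    simp only [Set.mem_setOf_eq, Set.mem_range]
    constructor
    · intro hi
      unfold fg at hi
      by_cases h1 : i.1 < k
      · refine ⟨⟨i.1, h1⟩, ?_⟩
        have hieq : i1 h2k ⟨i.1, h1⟩ = i := rfl
        rw [← hieq, zz_flip1, pp_flip1] at hi
        have hcond : g (flipCoord (zz h2k x) ⟨i.1, h1⟩) = g (zz h2k x) :=
          (u_mul_neg_ne_iff _ _ _).1 hi
        rw [hφ]
        simp only [if_neg (not_not.2 hcond)]
        exact hieq
      · by_cases h2 : i.1 < 2 * k
        · have hk : k ≤ i.1 := le_of_not_gt h1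
          refine ⟨⟨i.1 - k, by omega⟩, ?_⟩
          have hieq : i2 h2k ⟨i.1 - k, by omega⟩ = i :=
            Fin.ext (show k + (i.1 - k) = i.1 by omega)
          rw [← hieq, zz_flip2, pp_flip2] at hi
          have hcond : g (flipCoord (zz h2k x) ⟨i.1 - k, by omega⟩) ≠ g (zz h2k x) :=
            (u_mul_ne_iff _ _ _).1 hi
          rw [hφ]
          simp only [if_pos hcond]
          exact hieq
        · exact absurd (by
            have := fg_flip_hi h2k g x (le_of_not_gt h2)
            unfold fg at this
            exact this) hi
    · rintro ⟨j, rfl⟩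
      rw [hφ]
      by_cases hc : g (flipCoord (zz h2k x) j) ≠ g (zz h2k x)
      · simp only [if_pos hc]
        rw [fg_flip2]
        show g (flipCoord (zz h2k x) j) * pp h2k x ≠ g (zz h2k x) * pp h2k x
        exact (u_mul_ne_iff _ _ _).2 hc
      · simp only [if_neg hc]
        rw [fg_flip1]
        show g (flipCoord (zz h2k x) j) * (- pp h2k x) ≠ g (zz h2k x) * pp h2k x
        exact (u_mul_neg_ne_iff _ _ _).2 (not_not.1 hc)
  have hval : ∀ c : Fin k, (φ c).1 = c.1 ∨ (φ c).1 = k + c.1 := by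
    intro c
    rw [hφ]
    by_cases hc : g (flipCoord (zz h2k x) c) ≠ g (zz h2k x)
    · simp only [if_pos hc]; right; rfl
    · simp only [if_neg hc]; left; rfl
  have hinj : Function.Injective φ := by
    intro a b hab
    have h2a := a.2
    have h2b := b.2
    have hv := congrArg Fin.val hab
    rcases hval a with h | h <;> rcases hval b with h' | h' <;> rw [h, h'] at hv <;>
      exact Fin.ext (by omega)
  rw [hset, ← Set.image_univ, Set.ncard_image_of_injective _ hinj, Set.ncard_univ]
  simp

lemma fg_inj : Function.Injective (fg h2k) := by
  intro g g' h
  funext w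
  have hz : zz h2k (fun i : Fin n => if hlt : i.1 < k then w ⟨i.1, hlt⟩ else 1) = w := by
    funext j
    have h2 := j.2
    show (if hlt : (j : ℕ) < k then w ⟨(j : ℕ), hlt⟩ else 1)
        * (if hlt : k + (j : ℕ) < k then w ⟨k + (j : ℕ), hlt⟩ else 1) = w j
    rw [dif_pos j.2, dif_neg (show ¬ (k + (j : ℕ) < k) by omega)]
    simp
  have := congrFun h (fun i : Fin n => if hlt : i.1 < k then w ⟨i.1, hlt⟩ else 1)
  simp only [fg, hz] at this
  exact mul_right_cancel this

lemma dep_fg_lt {g : (Fin k → ℤˣ) → ℤˣ} {i : Fin n} (h : Dep (fg h2k g) i) : i.1 < 2 * k := by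
  by_contra hc
  obtain ⟨x, hx⟩ := h
  exact hx (fg_flip_hi h2k g x (le_of_not_gt hc))

end Construct

/-- For `n ≥ 2k`, `2^(2^k) ≤ 2^(2k+1)·(2k)!·G(n,k)`. -/
theorem numIsoKFun_lower (n k : ℕ) (hkn : k ≤ n) (h2k : 2 * k ≤ n) :
    2 ^ 2 ^ k ≤ 2 ^ (2 * k + 1) * Nat.factorial (2 * k) * numIsoKFun n k := by
  classical
  rcases Nat.eq_zero_or_pos k with hk0 | hkpos
  · subst hk0
    have hconst : IsKFun 0 (fun _ : Fin n → ℤˣ => (1 : ℤˣ)) := by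
      intro x
      have : {i : Fin n | (fun _ : Fin n → ℤˣ => (1:ℤˣ)) (flipCoord x i)
          ≠ (fun _ : Fin n → ℤˣ => (1:ℤˣ)) x} = ∅ := by
        ext i; simp
      rw [this, Set.ncard_empty]
    have hne : Nonempty (Quot fun (f g : {f : (Fin n → ℤˣ) → ℤˣ // IsKFun 0 f}) =>
        Isom (toReal f.1) (toReal g.1)) := ⟨Quot.mk _ ⟨_, hconst⟩⟩
    have h1 : 0 < numIsoKFun n 0 := by
      unfold numIsoKFun
      haveI := hne
      exact Nat.card_pos
    have h2 : 2 ^ (2 * 0 + 1) * Nat.factorial (2 * 0) * numIsoKFun n 0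
        = 2 * numIsoKFun n 0 := by norm_num [Nat.factorial]
    rw [h2]
    have h3 : (2 : ℕ) ^ 2 ^ 0 = 2 := by norm_num
    rw [h3]
    omega
  · -- main case
    set rel : {f : (Fin n → ℤˣ) → ℤˣ // IsKFun k f} → {f : (Fin n → ℤˣ) → ℤˣ // IsKFun k f} → Prop :=
      fun f g => Isom (toReal f.1) (toReal g.1) with hreldef
    have hrel_equiv : Equivalence rel :=
      ⟨fun f => isom_refl _, fun h => isom_symm h, fun h h' => isom_trans h h'⟩
    have hQcard : numIsoKFun n k = Nat.card (Quot rel) := rfl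
    set F : Quot rel → (Fin n → ℤˣ) → ℤˣ := fun c => (Quot.out c).1 with hFdef
    set cls : ((Fin k → ℤˣ) → ℤˣ) → Quot rel :=
      fun g => Quot.mk rel ⟨fg h2k g, isKFun_fg h2k g⟩ with hclsdef
    have hrelg : ∀ g, Isom (toReal (fg h2k g)) (toReal (F (cls g))) := by
      intro g
      have h1 : Quot.mk rel (Quot.out (cls g)) = Quot.mk rel ⟨fg h2k g, isKFun_fg h2k g⟩ := by
        rw [Quot.out_eq]
      have h2 : rel (Quot.out (cls g)) ⟨fg h2k g, isKFun_fg h2k g⟩ :=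
        (hrel_equiv.eqvGen_iff).1 (Quot.eq.1 h1)
      exact hrel_equiv.symm h2
    have hspec0 : ∀ g, ∃ (ε : ℤˣ) (α : Fin n → ℤˣ) (σ : Equiv.Perm (Fin n)),
        ∀ x, fg h2k g x = ε * F (cls g) (fun i => α i * x (σ i)) :=
      fun g => isom_units (hrelg g)
    choose ε α σ hspec using hspec0
    have hσlt : ∀ g i, Dep (F (cls g)) i → ((σ g) i).1 < 2 * k := by
      intro g i hdep
      have hiff := dep_congr (hspec g) ((σ g) i)
      rw [Equiv.symm_apply_apply] at hiff
      exact dep_fg_lt h2k (hiff.2 hdep)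
    set ρ : ∀ g : (Fin k → ℤˣ) → ℤˣ, {i : Fin n // Dep (F (cls g)) i} → Fin (2 * k) :=
      fun g r => ⟨((σ g) r.1).1, hσlt g r.1 r.2⟩ with hρdef
    have hρinj : ∀ g, Function.Injective (ρ g) := by
      intro g a b hab
      apply Subtype.ext
      have hv : (ρ g a).1 = (ρ g b).1 := congrArg Fin.val hab
      exact (σ g).injective (Fin.ext hv)
    have hιex : ∀ c : Quot rel, ∃ u : {i : Fin n // Dep (F c) i} → Fin (2 * k),
        (∃ v : {i : Fin n // Dep (F c) i} → Fin (2 * k), Function.Injective v) →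
          Function.Injective u := by
      intro c
      by_cases h : ∃ v : {i : Fin n // Dep (F c) i} → Fin (2 * k), Function.Injective v
      · obtain ⟨v, hv⟩ := h
        exact ⟨v, fun _ => hv⟩
      · exact ⟨fun _ => ⟨0, by omega⟩, fun hh => absurd hh h⟩
    choose ι hιinj using hιex
    have hι_inj : ∀ g, Function.Injective (ι (cls g)) := fun g => hιinj (cls g) ⟨ρ g, hρinj g⟩
    have hπex : ∀ g, ∃ π : Equiv.Perm (Fin (2 * k)),
        ∀ r : {i : Fin n // Dep (F (cls g)) i}, π (ι (cls g) r) = ρ g r :=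
      fun g => exists_perm_extend _ _ (hι_inj g) (hρinj g)
    choose π hπ using hπex
    set ab : ((Fin k → ℤˣ) → ℤˣ) → Fin (2 * k) → ℤˣ :=
      fun g => Function.extend (ι (cls g)) (fun r => α g r.1) (fun _ => 1) with habdef
    have hab : ∀ g r, ab g (ι (cls g) r) = α g r.1 :=
      fun g r => (hι_inj g).extend_apply (fun r => α g r.1) (fun _ => 1) r
    -- reconstruction function
    set recon : (ℤˣ × (Fin (2 * k) → ℤˣ) × Equiv.Perm (Fin (2 * k))) × Quot rel →
        (Fin n → ℤˣ) → ℤˣ := fun tq x =>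
      tq.1.1 * F tq.2 (fun i => if h : Dep (F tq.2) i then
        tq.1.2.1 (ι tq.2 ⟨i, h⟩) *
          x ⟨(tq.1.2.2 (ι tq.2 ⟨i, h⟩)).1,
            Nat.lt_of_lt_of_le (tq.1.2.2 (ι tq.2 ⟨i, h⟩)).2 h2k⟩
        else 1) with hrecdef
    set Φ : ((Fin k → ℤˣ) → ℤˣ) → (ℤˣ × (Fin (2 * k) → ℤˣ) × Equiv.Perm (Fin (2 * k))) × Quot rel :=
      fun g => ((ε g, ab g, π g), cls g) with hΦdef
    have hrecon : ∀ g, fg h2k g = recon (Φ g) := by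
      intro g
      funext x
      show fg h2k g x = (ε g) * F (cls g) (fun i => if h : Dep (F (cls g)) i then
        ab g (ι (cls g) ⟨i, h⟩) *
          x ⟨(π g (ι (cls g) ⟨i, h⟩)).1,
            Nat.lt_of_lt_of_le (π g (ι (cls g) ⟨i, h⟩)).2 h2k⟩
        else 1)
      rw [hspec g x]
      congr 1
      apply eval_eq_of_agree
      intro i hd
      rw [dif_pos hd, hab g ⟨i, hd⟩, hπ g ⟨i, hd⟩]
    have hΦinj : Function.Injective Φ := by
      intro g g' hgg
      apply fg_inj h2k
      rw [hrecon g, hrecon g', hgg]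
    have hfinQ : Finite (Quot rel) := by infer_instance
    have hcard := Nat.card_le_card_of_injective Φ hΦinj
    have hD : Nat.card ((Fin k → ℤˣ) → ℤˣ) = 2 ^ 2 ^ k := by
      rw [Nat.card_eq_fintype_card, Fintype.card_fun, Fintype.card_fun, Fintype.card_fin]
      rfl
    have hT : Nat.card ((ℤˣ × (Fin (2 * k) → ℤˣ) × Equiv.Perm (Fin (2 * k))) × Quot rel)
        = (2 * (2 ^ (2 * k) * Nat.factorial (2 * k))) * Nat.card (Quot rel) := by
      rw [Nat.card_prod, Nat.card_prod, Nat.card_prod]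
      rw [Nat.card_eq_fintype_card, Nat.card_eq_fintype_card, Nat.card_eq_fintype_card]
      rw [Fintype.card_fun, Fintype.card_fin, Fintype.card_perm, Fintype.card_fin]
      norm_num [show Fintype.card ℤˣ = 2 from rfl]
    rw [hD, hT] at hcard
    rw [hQcard]
    calc 2 ^ 2 ^ k ≤ (2 * (2 ^ (2 * k) * Nat.factorial (2 * k))) * Nat.card (Quot rel) := hcard
      _ = 2 ^ (2 * k + 1) * Nat.factorial (2 * k) * Nat.card (Quot rel) := by ring
end

section
/- Let 1 ≤ k ≤ n be integers with C(n,k) ≥ 4^{k-1}. Then F(n,k) ≤ C(C(n,k), 4^{k-1})·(2^k + 1)^{4^{k-1}}, where C(·,·) denotes the binomial coefficient. -/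
/-!
Expand `f` in the Walsh basis `χ_S(x) = ∏_{i ∈ S} x_i`. Summing over the `n` neighbours of a
vertex multiplies `χ_S` by `n - 2|S|` and, for a `k`-function, multiplies `f` by `n - 2k`; so the
Walsh coefficients of `f` live on the `k`-sets. Restricting `f` to the `k`-dimensional face
spanned by a `k`-set `S` gives `2^k` odd terms, and only the coefficient at `S` contributes to
this restricted sum; hence every coefficient is divisible by `2^(n-k+1)`. The quotients are
integers whose squares sum to `4^(k-1)` by Parseval, so at most `4^(k-1)` of them are nonzero and
each lies in `[-2^(k-1), 2^(k-1)]`. Since `f` is determined by them, choosing a `4^(k-1)`-set of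
`k`-sets containing the support and a value on each of its members bounds the number of
`k`-functions.
-/

open Finset

lemma Finset.card_le_choose_mul_pow_of_sparse {α β : Type*} [Fintype α] [DecidableEq α] [Zero β]
    [DecidableEq β] {G : Finset (α → β)} {U : Finset α} {V : Finset β} {m : ℕ} (hm : m ≤ #U)
    (hsupp : ∀ g ∈ G, ∀ a, g a ≠ 0 → a ∈ U) (hcard : ∀ g ∈ G, #{a | g a ≠ 0} ≤ m)
    (hval : ∀ g ∈ G, ∀ a, g a ∈ V) :
    #G ≤ (#U).choose m * #V ^ m := by
  let box : Finset α → Finset (α → β) := fun A =>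
    Fintype.piFinset fun a => if a ∈ A then V else {0}
  have hcover : G ⊆ (U.powersetCard m).biUnion box := by
    intro g hg
    obtain ⟨A, hsA, hAU, hA⟩ := exists_subsuperset_card_eq
      (fun a ha => hsupp g hg a (mem_filter.1 ha).2) (hcard g hg) hm
    refine mem_biUnion.2 ⟨A, mem_powersetCard.2 ⟨hAU, hA⟩, Fintype.mem_piFinset.2 fun a => ?_⟩
    split_ifs with ha
    · exact hval g hg a
    · exact mem_singleton.2 (not_not.1 fun h => ha (hsA (mem_filter.2 ⟨mem_univ a, h⟩)))
  have hbox : ∀ A ∈ U.powersetCard m, #(box A) = #V ^ m := fun A hA => by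
    simp [box, apply_ite card, (mem_powersetCard.1 hA).2]
  calc #G ≤ ∑ A ∈ U.powersetCard m, #(box A) := (card_le_card hcover).trans card_biUnion_le
    _ = (#U).choose m * #V ^ m := by
        rw [sum_congr rfl hbox, sum_const, card_powersetCard, smul_eq_mul]

lemma Finset.card_filter_ne_zero_le_sum_sq {ι : Type*} (s : Finset ι) (a : ι → ℤ) :
    (#{i ∈ s | a i ≠ 0} : ℤ) ≤ ∑ i ∈ s, a i ^ 2 := by
  calc (#{i ∈ s | a i ≠ 0} : ℤ) = ∑ i ∈ s with a i ≠ 0, 1 := by simp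
    _ ≤ ∑ i ∈ s with a i ≠ 0, a i ^ 2 := sum_le_sum fun i hi => by
        nlinarith [Int.one_le_abs (mem_filter.1 hi).2, sq_abs (a i)]
    _ ≤ ∑ i ∈ s, a i ^ 2 :=
        sum_le_sum_of_subset_of_nonneg (filter_subset _ _) fun _ _ _ => sq_nonneg _

lemma Int.even_sum_of_odd {ι : Type*} {s : Finset ι} {a : ι → ℤ} (ha : ∀ i ∈ s, Odd (a i))
    (hs : Even #s) : Even (∑ i ∈ s, a i) := by
  have h : ∑ i ∈ s, a i = ∑ i ∈ s, (a i - 1) + #s := by simp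
  rw [h]
  exact (even_sum _ fun i hi => (ha i hi).sub_odd odd_one).add ((Int.even_coe_nat _).2 hs)

namespace Hypercube

variable {n : ℕ}

lemma flipCoord_apply (x : Fin n → ℤˣ) (i j : Fin n) :
    flipCoord x i j = if j = i then -x i else x j :=
  Function.update_apply ..

lemma flipCoord_involutive (i : Fin n) : Function.Involutive (flipCoord · i) := fun x => by
  simp [flipCoord]

lemma flipCoord_ne (x : Fin n → ℤˣ) (i : Fin n) : flipCoord x i ≠ x := fun h => by
  simpa [flipCoord_apply, Int.units_ne_iff_eq_neg] using congrFun h i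

def walshChar (S : Finset (Fin n)) (x : Fin n → ℤˣ) : ℤ := ∏ i ∈ S, (x i : ℤ)

def walshCoeff (g : (Fin n → ℤˣ) → ℤ) (S : Finset (Fin n)) : ℤ := ∑ x, g x * walshChar S x

lemma walshChar_mul_self (S : Finset (Fin n)) (x : Fin n → ℤˣ) :
    walshChar S x * walshChar S x = 1 := by
  rw [walshChar, ← prod_mul_distrib]
  exact prod_eq_one fun i _ => Int.units_coe_mul_self (x i)

lemma walshChar_flipCoord (S : Finset (Fin n)) (x : Fin n → ℤˣ) (i : Fin n) :
    walshChar S (flipCoord x i) = if i ∈ S then -walshChar S x else walshChar S x := by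
  have h : ∀ j, (flipCoord x i j : ℤ) = (if j = i then -1 else 1) * x j := by
    intro j; rw [flipCoord_apply]; split_ifs with hj <;> simp [hj]
  rw [walshChar, prod_congr rfl fun j _ => h j, prod_mul_distrib, prod_ite_eq']
  split_ifs <;> simp [walshChar]

lemma sum_walshChar_mul_walshChar (x y : Fin n → ℤˣ) :
    ∑ S, walshChar S x * walshChar S y = if x = y then 2 ^ n else 0 := by
  have h : ∑ S, walshChar S x * walshChar S y = ∏ i, ((x i : ℤ) * y i + 1) := by
    simp [prod_add_one, walshChar, prod_mul_distrib]
  rw [h]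
  split_ifs with hxy
  · simp [hxy, Int.units_coe_mul_self]
  · obtain ⟨i, hi⟩ := Function.ne_iff.1 hxy
    refine prod_eq_zero (mem_univ i) ?_
    simp [Int.units_ne_iff_eq_neg.1 hi, Int.units_coe_mul_self]

lemma sum_walshCoeff_mul_walshChar (g : (Fin n → ℤˣ) → ℤ) (x : Fin n → ℤˣ) :
    ∑ S, walshCoeff g S * walshChar S x = 2 ^ n * g x := by
  simp_rw [walshCoeff, sum_mul, mul_assoc]
  rw [sum_comm]
  simp_rw [← mul_sum, sum_walshChar_mul_walshChar]
  simp [mul_comm]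

lemma sum_walshCoeff_mul_self (g : (Fin n → ℤˣ) → ℤ) :
    ∑ S, walshCoeff g S * walshCoeff g S = 2 ^ n * ∑ x, g x * g x := by
  calc ∑ S, walshCoeff g S * walshCoeff g S
      = ∑ S, ∑ x, g x * (walshCoeff g S * walshChar S x) := by
        refine sum_congr rfl fun S _ => ?_
        nth_rewrite 2 [walshCoeff]
        rw [mul_sum]
        exact sum_congr rfl fun x _ => by ring
    _ = ∑ x, g x * ∑ S, walshCoeff g S * walshChar S x := by
        rw [sum_comm]; simp_rw [mul_sum]
    _ = 2 ^ n * ∑ x, g x * g x := by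
        simp_rw [sum_walshCoeff_mul_walshChar, mul_sum]
        exact sum_congr rfl fun x _ => by ring

lemma walshCoeff_injective : Function.Injective (walshCoeff (n := n)) := fun g h hgh =>
  funext fun x => mul_left_cancel₀ (pow_ne_zero n two_ne_zero) <| by
    rw [← sum_walshCoeff_mul_walshChar, hgh, sum_walshCoeff_mul_walshChar]

lemma walshCoeff_sum_flipCoord (g : (Fin n → ℤˣ) → ℤ) (S : Finset (Fin n)) :
    walshCoeff (fun x => ∑ i, g (flipCoord x i)) S = (n - 2 * #S) * walshCoeff g S := by
  have hflip : ∀ i, ∑ x, g (flipCoord x i) * walshChar S x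
      = (if i ∈ S then -1 else 1) * walshCoeff g S := by
    intro i
    rw [← (flipCoord_involutive i).bijective.sum_comp]
    simp only [flipCoord_involutive i _, walshChar_flipCoord, walshCoeff]
    split_ifs <;> simp [mul_sum]
  have hsign : ∑ i : Fin n, (if i ∈ S then -1 else 1 : ℤ) = n - 2 * #S := by
    have hS : #S ≤ n := by simpa using card_le_univ S
    rw [sum_ite, sum_const, sum_const, filter_mem_eq_inter, univ_inter, filter_not,
      filter_mem_eq_inter, univ_inter, card_sdiff_of_subset (subset_univ S)]
    simp only [Int.reduceNeg, Int.nsmul_eq_mul, mul_neg, mul_one, card_univ, Fintype.card_fin]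
    omega
  rw [walshCoeff]
  simp_rw [sum_mul]
  rw [sum_comm]
  simp_rw [hflip, ← sum_mul, hsign]

-- In the normalization `f̂(S) = 2^(-n) * walshCoeff f S` this is `2^(k-1) f̂(S)`; the division is
-- exact for `k`-functions with `k ≥ 1` (`IsKFun.pow_dvd_walshCoeff`).
def scaledWalshCoeff (k : ℕ) (g : (Fin n → ℤˣ) → ℤ) (S : Finset (Fin n)) : ℤ :=
  walshCoeff g S / 2 ^ (n - k + 1)

def subcube (S : Finset (Fin n)) : Finset (Fin n → ℤˣ) :=
  Fintype.piFinset fun i => if i ∈ S then univ else {1}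

lemma mem_subcube {S : Finset (Fin n)} {x : Fin n → ℤˣ} : x ∈ subcube S ↔ ∀ i ∉ S, x i = 1 := by
  simp only [subcube, Fintype.mem_piFinset]
  refine forall_congr' fun i => ?_
  split_ifs with hi <;> simp only [hi, mem_univ, mem_singleton, not_true, false_imp_iff,
    not_false_eq_true, forall_const]

lemma card_subcube (S : Finset (Fin n)) : #(subcube S) = 2 ^ #S := by
  simp [subcube, apply_ite card]

lemma sum_subcube_walshChar_mul_walshChar (S T : Finset (Fin n)) :
    ∑ x ∈ subcube S, walshChar T x * walshChar S x = if S ⊆ T then 2 ^ #S else 0 := by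
  split_ifs with hST
  · have h : ∀ x ∈ subcube S, walshChar T x * walshChar S x = 1 := by
      intro x hx
      have hrest : walshChar (T \ S) x = 1 :=
        prod_eq_one fun i hi => by rw [mem_subcube.1 hx i (mem_sdiff.1 hi).2, Units.val_one]
      rw [walshChar, ← prod_sdiff hST, ← walshChar, ← walshChar, hrest, one_mul,
        walshChar_mul_self]
    simp [sum_congr rfl h, card_subcube]
  · obtain ⟨j, hjS, hjT⟩ := not_subset.1 hST
    refine sum_involution (fun x _ => flipCoord x j) (fun x _ => ?_)
      (fun x _ _ => flipCoord_ne x j) (fun x hx => ?_) (fun x _ => flipCoord_involutive j x)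
    · simp [walshChar_flipCoord, hjS, hjT]
    · refine mem_subcube.2 fun i hi => ?_
      rw [flipCoord_apply, if_neg (by rintro rfl; exact hi hjS)]
      exact mem_subcube.1 hx i hi

lemma sum_subcube_mul_walshChar (g : (Fin n → ℤˣ) → ℤ) (S : Finset (Fin n)) :
    2 ^ n * ∑ x ∈ subcube S, g x * walshChar S x
      = 2 ^ #S * ∑ T with S ⊆ T, walshCoeff g T := by
  calc 2 ^ n * ∑ x ∈ subcube S, g x * walshChar S x
      = ∑ x ∈ subcube S, (∑ T, walshCoeff g T * walshChar T x) * walshChar S x := by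
        simp_rw [mul_sum, sum_walshCoeff_mul_walshChar, mul_assoc]
    _ = ∑ T, walshCoeff g T * ∑ x ∈ subcube S, walshChar T x * walshChar S x := by
        simp_rw [sum_mul, mul_sum, mul_assoc]; rw [sum_comm]
    _ = 2 ^ #S * ∑ T with S ⊆ T, walshCoeff g T := by
        simp_rw [sum_subcube_walshChar_mul_walshChar, mul_ite, mul_zero, ← sum_filter, mul_sum,
          mul_comm]

end Hypercube

namespace IsKFun

open Hypercube

variable {n k : ℕ} {f : (Fin n → ℤˣ) → ℤˣ}

lemma le (hf : IsKFun k f) : k ≤ n := by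
  rw [← hf fun _ => 1]
  simpa using Set.ncard_le_card ({i | _} : Set (Fin n))

lemma sum_flipCoord (hf : IsKFun k f) (x : Fin n → ℤˣ) :
    ∑ i, (f (flipCoord x i) : ℤ) = (n - 2 * k) * f x := by
  have hcard : #{i | f (flipCoord x i) ≠ f x} = k := by
    simpa [Set.ncard_eq_toFinset_card'] using hf x
  have h : ∀ u v : ℤˣ, (u : ℤ) = (1 - 2 * if u ≠ v then 1 else 0) * v := by
    intro u v
    split_ifs with huv
    · simp [Int.units_ne_iff_eq_neg.1 huv]
    · simp [not_not.1 huv]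
  simp_rw [fun i => h (f (flipCoord x i)) (f x), ← sum_mul, sum_sub_distrib, ← mul_sum,
    sum_boole, hcard]
  simp

lemma walshCoeff_eq_zero (hf : IsKFun k f) {S : Finset (Fin n)} (hS : #S ≠ k) :
    walshCoeff (fun x => (f x : ℤ)) S = 0 := by
  have h := walshCoeff_sum_flipCoord (fun x => (f x : ℤ)) S
  simp only [sum_flipCoord hf, walshCoeff, mul_assoc, ← mul_sum] at h ⊢
  have hne : (n - 2 * k : ℤ) ≠ n - 2 * #S := by omega
  exact (mul_eq_mul_right_iff.1 h).resolve_left hne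

lemma pow_dvd_walshCoeff (hf : IsKFun k f) (hk : 1 ≤ k) (S : Finset (Fin n)) :
    2 ^ (n - k + 1) ∣ walshCoeff (fun x => (f x : ℤ)) S := by
  by_cases hS : #S = k
  swap
  · rw [walshCoeff_eq_zero hf hS]
    exact dvd_zero _
  have hsum : ∑ T with S ⊆ T, walshCoeff (fun x => (f x : ℤ)) T
      = walshCoeff (fun x => (f x : ℤ)) S := by
    refine sum_eq_single_of_mem S (by simp) fun T hT hTS => walshCoeff_eq_zero hf ?_
    have := card_lt_card (ssubset_of_subset_of_ne (mem_filter.1 hT).2 (Ne.symm hTS))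
    omega
  have hodd : ∀ x, Odd ((f x : ℤ) * walshChar S x) := fun x => by
    have hsq : (f x : ℤ) * walshChar S x * ((f x : ℤ) * walshChar S x) = 1 := by
      rw [mul_mul_mul_comm, Int.units_coe_mul_self, walshChar_mul_self, one_mul]
    exact (Int.odd_mul.1 (hsq ▸ odd_one)).1
  obtain ⟨m, hm⟩ := Int.even_sum_of_odd (fun x _ => hodd x)
    (by rw [card_subcube, hS]; exact (Nat.even_pow' (by omega)).2 even_two)
  have h := sum_subcube_mul_walshChar (fun x => (f x : ℤ)) S
  rw [hsum, hm, hS] at h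
  refine ⟨m, mul_left_cancel₀ (pow_ne_zero k two_ne_zero) ?_⟩
  have hn : (2 : ℤ) ^ n = 2 ^ k * 2 ^ (n - k) := by rw [← pow_add, Nat.add_sub_cancel' hf.le]
  rw [← h, hn, pow_succ]
  ring

lemma walshCoeff_eq_pow_mul (hf : IsKFun k f) (hk : 1 ≤ k) (S : Finset (Fin n)) :
    walshCoeff (fun x => (f x : ℤ)) S
      = 2 ^ (n - k + 1) * scaledWalshCoeff k (fun x => (f x : ℤ)) S :=
  (Int.mul_ediv_cancel' (pow_dvd_walshCoeff hf hk S)).symm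

lemma scaledWalshCoeff_eq_zero (hf : IsKFun k f) {S : Finset (Fin n)} (hS : #S ≠ k) :
    scaledWalshCoeff k (fun x => (f x : ℤ)) S = 0 := by
  rw [scaledWalshCoeff, walshCoeff_eq_zero hf hS, Int.zero_ediv]

lemma sum_scaledWalshCoeff_sq (hf : IsKFun k f) (hk : 1 ≤ k) :
    ∑ S, scaledWalshCoeff k (fun x => (f x : ℤ)) S ^ 2 = 4 ^ (k - 1) := by
  have h := sum_walshCoeff_mul_self (fun x => (f x : ℤ))
  simp only [walshCoeff_eq_pow_mul hf hk, Int.units_coe_mul_self, sum_const, card_univ,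
    Fintype.card_fun, Fintype.card_fin, Fintype.card_units_int, nsmul_eq_mul, mul_one,
    Nat.cast_pow, Nat.cast_ofNat] at h
  have h2 : (2 : ℤ) ^ n = 2 ^ (n - k + 1) * 2 ^ (k - 1) := by
    rw [← pow_add]; congr 1; have := hf.le; omega
  have h4 : (4 : ℤ) ^ (k - 1) = 2 ^ (k - 1) * 2 ^ (k - 1) := by rw [← mul_pow]; norm_num
  rw [h2] at h
  refine mul_left_cancel₀ (pow_ne_zero (n - k + 1) (two_ne_zero (α := ℤ))) ?_
  refine mul_left_cancel₀ (pow_ne_zero (n - k + 1) (two_ne_zero (α := ℤ))) ?_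
  calc _ = ∑ S, 2 ^ (n - k + 1) * scaledWalshCoeff k (fun x => (f x : ℤ)) S
        * (2 ^ (n - k + 1) * scaledWalshCoeff k (fun x => (f x : ℤ)) S) := by
        simp_rw [mul_sum]; exact sum_congr rfl fun S _ => by ring
    _ = _ := by rw [h, h4]; ring

lemma card_support_scaledWalshCoeff_le (hf : IsKFun k f) (hk : 1 ≤ k) :
    #{S | scaledWalshCoeff k (fun x => (f x : ℤ)) S ≠ 0} ≤ 4 ^ (k - 1) := by
  have h := card_filter_ne_zero_le_sum_sq univ (scaledWalshCoeff k fun x => (f x : ℤ))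
  rw [sum_scaledWalshCoeff_sq hf hk] at h
  exact_mod_cast h

lemma scaledWalshCoeff_mem_Icc (hf : IsKFun k f) (hk : 1 ≤ k) (S : Finset (Fin n)) :
    scaledWalshCoeff k (fun x => (f x : ℤ)) S ∈ Icc (-2 ^ (k - 1)) (2 ^ (k - 1)) := by
  have h := single_le_sum (fun T _ => sq_nonneg (scaledWalshCoeff k (fun x => (f x : ℤ)) T))
    (mem_univ S)
  rw [sum_scaledWalshCoeff_sq hf hk, show (4 : ℤ) = 2 ^ 2 by norm_num, ← pow_mul,
    mul_comm, pow_mul] at h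
  exact mem_Icc.2 (abs_le_of_sq_le_sq' h (by positivity))

lemma injOn_scaledWalshCoeff (hk : 1 ≤ k) :
    Set.InjOn (fun f : (Fin n → ℤˣ) → ℤˣ => scaledWalshCoeff k fun x => (f x : ℤ))
      {f | IsKFun k f} := by
  intro f hf g hg hfg
  have h : (fun x => (f x : ℤ)) = fun x => (g x : ℤ) := walshCoeff_injective <| funext fun S => by
    rw [hf.walshCoeff_eq_pow_mul hk, hg.walshCoeff_eq_pow_mul hk]
    exact congrArg _ (congrFun hfg S)
  exact funext fun x => Units.ext (congrFun h x)

end IsKFun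

theorem numKFun_upper_general (n k : ℕ) (hk : 1 ≤ k)
    (hch : 4 ^ (k - 1) ≤ n.choose k) :
    numKFun n k ≤ (n.choose k).choose (4 ^ (k - 1)) * (2 ^ k + 1) ^ 4 ^ (k - 1) := by
  classical
  let coeff := fun f : (Fin n → ℤˣ) → ℤˣ => Hypercube.scaledWalshCoeff k fun x => (f x : ℤ)
  have hV : #(Icc (-2 ^ (k - 1) : ℤ) (2 ^ (k - 1))) = 2 ^ k + 1 := by
    have h2 : (2 : ℤ) ^ k = 2 * 2 ^ (k - 1) := by rw [← pow_succ']; congr 1; omega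
    rw [Int.card_Icc, show (2 ^ (k - 1) + 1 - -2 ^ (k - 1) : ℤ) = ((2 ^ k + 1 : ℕ) : ℤ) by
      push_cast; rw [h2]; ring, Int.toNat_natCast]
  calc numKFun n k = #(({f | IsKFun k f} : Finset _).image coeff) := by
        rw [numKFun, Nat.card_eq_fintype_card, Fintype.card_subtype,
          card_image_of_injOn (by simpa using IsKFun.injOn_scaledWalshCoeff hk)]
    _ ≤ (#(powersetCard k (univ : Finset (Fin n)))).choose (4 ^ (k - 1))
          * #(Icc (-2 ^ (k - 1) : ℤ) (2 ^ (k - 1))) ^ 4 ^ (k - 1) := by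
        refine card_le_choose_mul_pow_of_sparse (by simpa using hch) ?_ ?_ ?_ <;>
          simp only [mem_image, mem_filter, mem_univ, true_and, forall_exists_index, and_imp] <;>
          rintro _ f hf rfl
        · exact fun S hS =>
            mem_powersetCard_univ.2 (not_not.1 fun h => hS (hf.scaledWalshCoeff_eq_zero h))
        · exact hf.card_support_scaledWalshCoeff_le hk
        · exact hf.scaledWalshCoeff_mem_Icc hk
    _ = (n.choose k).choose (4 ^ (k - 1)) * (2 ^ k + 1) ^ 4 ^ (k - 1) := by
        rw [card_powersetCard, card_univ, Fintype.card_fin, hV]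

/-- `F(n,k) ≤ C(C(n,k), 4^(k-1)) · (2^k + 1)^(4^(k-1))` when `C(n,k) ≥ 4^(k-1)`. -/
theorem numKFun_upper (n k : ℕ) (hk : 1 ≤ k) (hkn : k ≤ n)
    (hch : 4 ^ (k - 1) ≤ n.choose k) :
    numKFun n k ≤ (n.choose k).choose (4 ^ (k - 1)) * (2 ^ k + 1) ^ 4 ^ (k - 1) :=
  numKFun_upper_general n k hk hch
end
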